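/- arXiv:1208.5703 — 9 statements merged into one kernel-verified Lean document; each statement's English description precedes it below -/
import Mathlib

section
/- For every λ ∈ ℂ, det(λ·I_{3n} − A) = det( (λ−1)²·(λ−1+p)·Iₙ + ((λ−1)·κ₁ + p·(κ₁−κ₂))·τ·(L·R) ), where A, L and R are regarded as complex matrices. -/
open Matrix Polynomial

/-- The 3n×3n transition matrix of the skewless clock-synchronization algorithm:
`A = [[Iₙ, τR, 0],[−κ₁L, Iₙ, −κ₂Iₙ],[−pL, 0, (1−p)Iₙ]]`. -/
noncomputable def Amat (n : ℕ) (τ κ₁ κ₂ p : ℝ) (L R : Matrix (Fin n) (Fin n) ℝ) :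
    Matrix (Fin n ⊕ Fin n ⊕ Fin n) (Fin n ⊕ Fin n ⊕ Fin n) ℝ :=
  Matrix.fromBlocks 1 (Matrix.fromCols (τ • R) 0)
    (Matrix.fromRows ((-κ₁) • L) ((-p) • L))
    (Matrix.fromBlocks 1 ((-κ₂) • (1 : Matrix (Fin n) (Fin n) ℝ)) 0
      ((1 - p) • (1 : Matrix (Fin n) (Fin n) ℝ)))

/-!
Away from `λ = 1` and `λ = 1 - p` the diagonal blocks `(λ - 1) • 1` and `(λ - 1 + p) • 1` of
`λ • 1 - A` are invertible scalar matrices, and two Schur complements, along the top-left block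
and then along the last diagonal block, collapse the `3n × 3n` determinant to the `n × n` one.
Both sides are continuous in `λ`, so the identity extends to the two exceptional values by
density.
-/

section BlockDeterminant

variable {K : Type*} [Field K] {m n : Type*} [Fintype m] [Fintype n] [DecidableEq m]
  [DecidableEq n]

theorem det_fromBlocks_smul_one₁₁ {d : K} (hd : d ≠ 0) (B : Matrix m n K) (C : Matrix n m K)
    (D : Matrix n n K) :
    (fromBlocks (d • 1) B C D).det = d ^ Fintype.card m * (D - d⁻¹ • (C * B)).det := by
  let : Invertible (d • (1 : Matrix m m K)) :=
    invertibleOfRightInverse _ (d⁻¹ • 1) (by simp [smul_smul, hd])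
  rw [det_fromBlocks₁₁, det_smul, det_one, mul_one]
  simp [show ⅟(d • (1 : Matrix m m K)) = d⁻¹ • 1 from rfl]

theorem det_fromBlocks_smul_one₂₂ {d : K} (hd : d ≠ 0) (A : Matrix m m K) (B : Matrix m n K)
    (C : Matrix n m K) :
    (fromBlocks A B C (d • 1)).det = d ^ Fintype.card n * (A - d⁻¹ • (B * C)).det := by
  let : Invertible (d • (1 : Matrix n n K)) :=
    invertibleOfRightInverse _ (d⁻¹ • 1) (by simp [smul_smul, hd])
  rw [det_fromBlocks₂₂, det_smul, det_one, mul_one]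
  simp [show ⅟(d • (1 : Matrix n n K)) = d⁻¹ • 1 from rfl]

theorem det_fromBlocks_smul_one_three {a b : K} (ha : a ≠ 0) (hb : b ≠ 0) (t k₁ k₂ q : K)
    (L R : Matrix n n K) :
    (fromBlocks (a • 1) (fromCols (t • R) 0) (fromRows (k₁ • L) (q • L))
        (fromBlocks (a • 1) (k₂ • 1) 0 (b • 1))).det
      = ((a ^ 2 * b) • 1 - (t * (b * k₁ - k₂ * q)) • (L * R)).det := by
  rw [det_fromBlocks_smul_one₁₁ ha, fromRows_mul_fromCols]
  simp only [Matrix.mul_zero, fromBlocks_smul, sub_eq_add_neg, fromBlocks_neg, fromBlocks_add,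
    smul_zero, neg_zero, add_zero]
  rw [det_fromBlocks_smul_one₂₂ hb, ← mul_assoc, ← mul_pow, ← det_smul]
  congr 1
  simp only [smul_add, smul_neg, smul_smul, Matrix.smul_mul, Matrix.mul_smul, Matrix.one_mul]
  match_scalars
  · ring
  · field_simp
    ring

end BlockDeterminant

theorem smul_one_sub_Amat_map (n : ℕ) (τ κ₁ κ₂ p : ℝ) (L R : Matrix (Fin n) (Fin n) ℝ) (z : ℂ) :
    z • 1 - (Amat n τ κ₁ κ₂ p L R).map Complex.ofReal
      = fromBlocks ((z - 1) • 1) (fromCols ((-τ : ℂ) • R.map Complex.ofReal) 0)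
          (fromRows ((κ₁ : ℂ) • L.map Complex.ofReal) ((p : ℂ) • L.map Complex.ofReal))
          (fromBlocks ((z - 1) • 1) ((κ₂ : ℂ) • 1) 0 ((z - 1 + p) • 1)) := by
  ext (i | i | i) (j | j | j) <;> simp [Amat, one_apply] <;> split_ifs <;> simp
  ring

theorem stmt0_general (n : ℕ) (τ κ₁ κ₂ p : ℝ)
    (L : Matrix (Fin n) (Fin n) ℝ)
    (R : Matrix (Fin n) (Fin n) ℝ)
    (lam : ℂ) :
    (lam • (1 : Matrix (Fin n ⊕ Fin n ⊕ Fin n) (Fin n ⊕ Fin n ⊕ Fin n) ℂ)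
        - (Amat n τ κ₁ κ₂ p L R).map Complex.ofReal).det
      = (((lam - 1) ^ 2 * (lam - 1 + (p : ℂ))) • (1 : Matrix (Fin n) (Fin n) ℂ)
        + (((lam - 1) * (κ₁ : ℂ) + (p : ℂ) * ((κ₁ : ℂ) - (κ₂ : ℂ))) * (τ : ℂ)) •
          ((L * R).map Complex.ofReal)).det := by
  let F : ℂ → ℂ := fun z =>
    (z • (1 : Matrix (Fin n ⊕ Fin n ⊕ Fin n) (Fin n ⊕ Fin n ⊕ Fin n) ℂ)
      - (Amat n τ κ₁ κ₂ p L R).map Complex.ofReal).det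
  let G : ℂ → ℂ := fun z =>
    (((z - 1) ^ 2 * (z - 1 + (p : ℂ))) • (1 : Matrix (Fin n) (Fin n) ℂ)
      + (((z - 1) * (κ₁ : ℂ) + (p : ℂ) * ((κ₁ : ℂ) - (κ₂ : ℂ))) * (τ : ℂ)) •
        ((L * R).map Complex.ofReal)).det
  have hFG : Set.EqOn F G {1, 1 - (p : ℂ)}ᶜ := by
    intro z hz
    simp only [Set.mem_compl_iff, Set.mem_insert_iff, Set.mem_singleton_iff, not_or] at hz
    have ha : z - 1 ≠ 0 := sub_ne_zero.mpr hz.1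
    have hb : z - 1 + (p : ℂ) ≠ 0 := fun h => hz.2 (by linear_combination h)
    have hLR : (L * R).map Complex.ofReal = L.map Complex.ofReal * R.map Complex.ofReal :=
      Matrix.map_mul (f := Complex.ofRealHom)
    dsimp only [F, G]
    rw [smul_one_sub_Amat_map, det_fromBlocks_smul_one_three ha hb, hLR, sub_eq_add_neg,
      ← neg_smul]
    congr 3
    ring
  have hF : Continuous F := by fun_prop
  have hG : Continuous G := by fun_prop
  exact congrFun (hF.ext_on ((Set.toFinite _).countable.dense_compl ℂ) hG hFG) lam

/-- For every `λ ∈ ℂ`,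
`det(λ I₃ₙ − A) = det((λ−1)²(λ−1+p) Iₙ + ((λ−1)κ₁ + p(κ₁−κ₂)) τ (L R))`. -/
theorem stmt0 (n : ℕ) (hn : 1 ≤ n) (τ κ₁ κ₂ p : ℝ)
    (L : Matrix (Fin n) (Fin n) ℝ) (r : Fin n → ℝ)
    (R : Matrix (Fin n) (Fin n) ℝ) (hR : R = Matrix.diagonal r)
    (lam : ℂ) :
    (lam • (1 : Matrix (Fin n ⊕ Fin n ⊕ Fin n) (Fin n ⊕ Fin n ⊕ Fin n) ℂ)
        - (Amat n τ κ₁ κ₂ p L R).map Complex.ofReal).det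
      = (((lam - 1) ^ 2 * (lam - 1 + (p : ℂ))) • (1 : Matrix (Fin n) (Fin n) ℂ)
        + (((lam - 1) * (κ₁ : ℂ) + (p : ℂ) * ((κ₁ : ℂ) - (κ₂ : ℂ))) * (τ : ℂ)) •
          ((L * R).map Complex.ofReal)).det :=
  stmt0_general n τ κ₁ κ₂ p L R lam
end

section
/- Let ν₁,…,νₙ ∈ ℂ be the roots, counted with algebraic multiplicity, of the characteristic polynomial of τ·L·R. Then for every λ ∈ ℂ, det(λ·I_{3n} − A) = ∏_{l=1}^{n} g_{ν_l}(λ). In particular, μ ∈ ℂ is an eigenvalue of A if and only if g_ν(μ) = 0 for some complex eigenvalue ν of τ·L·R. -/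
open Matrix Polynomial

/-- The cubic `g_ν(λ) = (λ−1)²(λ−1+p) + ((λ−1)κ₁ + p(κ₁−κ₂))ν`. -/
noncomputable def gval (κ₁ κ₂ p : ℝ) (ν lam : ℂ) : ℂ :=
  (lam - 1) ^ 2 * (lam - 1 + (p : ℂ)) +
    ((lam - 1) * (κ₁ : ℂ) + (p : ℂ) * ((κ₁ : ℂ) - (κ₂ : ℂ))) * ν

/-!
For `λ ∉ {1, 1 - p}` the diagonal blocks `(λ-1)I` and `(λ-1+p)I` of `λI - A` are invertible
scalars, and two Schur complements reduce `det(λI - A)` to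
`det((λ-1)²(λ-1+p) I + ((λ-1)κ₁ + p(κ₁-κ₂)) τLR)`, which the eigenvalues `νₗ` of `τLR` factor as
`∏ₗ g_{νₗ}(λ)`. Both sides are polynomials in `λ` agreeing at all but two points, hence
everywhere.
-/

namespace Matrix

variable {K : Type*} [Field K] {m n : Type*} [Fintype m] [Fintype n] [DecidableEq m] [DecidableEq n]

theorem smul_one_mul_inv_smul_one {a : K} (ha : a ≠ 0) :
    (a • 1 : Matrix m m K) * (a⁻¹ • 1) = 1 := by
  rw [smul_one_mul, smul_smul, mul_inv_cancel₀ ha, one_smul]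

theorem det_fromBlocks_smul_one₁₁ {a : K} (ha : a ≠ 0) (B : Matrix m n K) (C : Matrix n m K)
    (D : Matrix n n K) :
    (fromBlocks (a • 1) B C D).det = a ^ Fintype.card m * (D - a⁻¹ • (C * B)).det := by
  have h := smul_one_mul_inv_smul_one (m := m) ha
  have := invertibleOfRightInverse _ _ h
  rw [det_fromBlocks₁₁, invOf_eq_right_inv h, det_smul, det_one, mul_one, Matrix.mul_smul,
    Matrix.mul_one, Matrix.smul_mul]

theorem det_fromBlocks_smul_one₂₂ {b : K} (hb : b ≠ 0) (A : Matrix m m K) (B : Matrix m n K)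
    (C : Matrix n m K) :
    (fromBlocks A B C (b • 1)).det = b ^ Fintype.card n * (A - b⁻¹ • (B * C)).det := by
  have h := smul_one_mul_inv_smul_one (m := n) hb
  have := invertibleOfRightInverse _ _ h
  rw [det_fromBlocks₂₂, invOf_eq_right_inv h, det_smul, det_one, mul_one, Matrix.mul_smul,
    Matrix.mul_one, Matrix.smul_mul]

theorem det_clockBlocks (L R : Matrix m m K) (τ κ₁ κ₂ p : K) {a b : K} (ha : a ≠ 0)
    (hb : b ≠ 0) :
    (fromBlocks (a • 1) (fromCols ((-τ) • R) (0 : Matrix m m K)) (fromRows (κ₁ • L) (p • L))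
        (fromBlocks (a • 1) (κ₂ • 1) 0 (b • 1))).det
      = ((a ^ 2 * b) • 1 + (b * κ₁ - p * κ₂) • (τ • (L * R))).det := by
  have hSchur : fromBlocks (a • 1) (κ₂ • 1) 0 (b • 1)
        - a⁻¹ • (fromRows (κ₁ • L) (p • L) * fromCols ((-τ) • R) (0 : Matrix m m K))
      = fromBlocks (a • 1 + (a⁻¹ * τ * κ₁) • (L * R)) (κ₂ • 1) ((a⁻¹ * τ * p) • (L * R))
          (b • 1) := by
    rw [fromRows_mul_fromCols, fromBlocks_smul, sub_eq_add_neg, fromBlocks_neg, fromBlocks_add]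
    simp only [Matrix.smul_mul, Matrix.mul_smul, Matrix.mul_zero, smul_zero, neg_zero, add_zero,
      smul_smul]
    congr 1 <;> module
  rw [det_fromBlocks_smul_one₁₁ ha, hSchur, det_fromBlocks_smul_one₂₂ hb, ← mul_assoc,
    ← mul_pow, ← det_smul]
  congr 1
  simp only [smul_sub, smul_add, smul_smul, smul_one_mul]
  match_scalars <;> field_simp

theorem eval_charpoly_eq_det_smul_one_sub (M : Matrix m m K) (t : K) :
    M.charpoly.eval t = (t • 1 - M).det := by
  rw [eval_charpoly, scalar_apply, smul_one_eq_diagonal]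

theorem det_smul_one_add_smul_of_charpoly_eq_prod {M : Matrix m m K} {ν : m → K}
    (hM : M.charpoly = ∏ i, (X - C (ν i))) (x c : K) :
    (x • 1 + c • M).det = ∏ i, (x + c * ν i) := by
  rcases eq_or_ne c 0 with rfl | hc
  · simp
  have hscale : x • 1 + c • M = (-c) • ((-x / c) • 1 - M) := by
    rw [smul_sub, smul_smul, neg_smul c M, sub_neg_eq_add]
    congr 2
    field_simp
  rw [hscale, det_smul, ← eval_charpoly_eq_det_smul_one_sub, hM, eval_prod, ← Finset.card_univ,
    ← Finset.prod_const, ← Finset.prod_mul_distrib]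
  refine Finset.prod_congr rfl fun i _ => ?_
  simp only [eval_sub, eval_X, eval_C]
  field_simp
  ring

end Matrix

theorem Polynomial.eq_of_eval_eq_off_finite {R : Type*} [CommRing R] [IsDomain R] [Infinite R]
    {p q : R[X]} {s : Set R} (hs : s.Finite) (h : ∀ x ∉ s, p.eval x = q.eval x) : p = q :=
  eq_of_infinite_eval_eq p q (hs.infinite_compl.mono h)

theorem smul_one_sub_map_Amat (n : ℕ) (τ κ₁ κ₂ p : ℝ) (L R : Matrix (Fin n) (Fin n) ℝ)
    (lam : ℂ) :
    lam • 1 - (Amat n τ κ₁ κ₂ p L R).map Complex.ofReal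
      = fromBlocks ((lam - 1) • 1) (fromCols ((-(τ : ℂ)) • R.map Complex.ofReal) 0)
          (fromRows ((κ₁ : ℂ) • L.map Complex.ofReal) ((p : ℂ) • L.map Complex.ofReal))
          (fromBlocks ((lam - 1) • 1) ((κ₂ : ℂ) • 1) 0 ((lam - 1 + p) • 1)) := by
  ext (i | i | i) (j | j | j) <;>
    simp [Amat, fromBlocks, fromCols, one_apply, apply_ite Complex.ofReal] <;>
    split_ifs <;> ring

noncomputable def gpoly (κ₁ κ₂ p : ℝ) (ν : ℂ) : ℂ[X] :=
  (X - 1) ^ 2 * (X - 1 + C (p : ℂ)) + ((X - 1) * C (κ₁ : ℂ) + C ((p : ℂ) * (κ₁ - κ₂))) * C ν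

theorem eval_gpoly (κ₁ κ₂ p : ℝ) (ν lam : ℂ) : (gpoly κ₁ κ₂ p ν).eval lam = gval κ₁ κ₂ p ν lam := by
  simp [gpoly, gval]

theorem stmt1_general (n : ℕ) (τ κ₁ κ₂ p : ℝ)
    (L : Matrix (Fin n) (Fin n) ℝ)
    (R : Matrix (Fin n) (Fin n) ℝ)
    (ν : Fin n → ℂ)
    (hν : ((τ • (L * R)).map Complex.ofReal).charpoly = ∏ l : Fin n, (X - C (ν l))) :
    (∀ lam : ℂ,
      (lam • (1 : Matrix (Fin n ⊕ Fin n ⊕ Fin n) (Fin n ⊕ Fin n ⊕ Fin n) ℂ)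
          - (Amat n τ κ₁ κ₂ p L R).map Complex.ofReal).det
        = ∏ l : Fin n, gval κ₁ κ₂ p (ν l) lam) ∧
    (∀ μ : ℂ,
      ((Amat n τ κ₁ κ₂ p L R).map Complex.ofReal).charpoly.IsRoot μ ↔
        ∃ νe : ℂ, ((τ • (L * R)).map Complex.ofReal).charpoly.IsRoot νe ∧
          gval κ₁ κ₂ p νe μ = 0) := by
  have hτLR : (τ • (L * R)).map Complex.ofReal
      = (τ : ℂ) • (L.map Complex.ofReal * R.map Complex.ofReal) := by
    ext i j
    simp [mul_apply, Finset.mul_sum]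
  have hcharpoly : ((Amat n τ κ₁ κ₂ p L R).map Complex.ofReal).charpoly
      = ∏ l, gpoly κ₁ κ₂ p (ν l) := by
    refine Polynomial.eq_of_eval_eq_off_finite ((Set.toFinite {1}).insert (1 - (p : ℂ)))
      fun lam hlam => ?_
    simp only [Set.mem_insert_iff, Set.mem_singleton_iff, not_or] at hlam
    have ha : lam - 1 ≠ 0 := sub_ne_zero.mpr hlam.2
    have hb : lam - 1 + p ≠ 0 := fun h => hlam.1 (by linear_combination h)
    rw [eval_charpoly_eq_det_smul_one_sub, smul_one_sub_map_Amat, det_clockBlocks _ _ _ _ _ _ ha hb,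
      ← hτLR, det_smul_one_add_smul_of_charpoly_eq_prod hν, eval_prod]
    refine Finset.prod_congr rfl fun l _ => ?_
    rw [eval_gpoly, gval]
    ring
  have hdet (lam : ℂ) : (lam • (1 : Matrix (Fin n ⊕ Fin n ⊕ Fin n) (Fin n ⊕ Fin n ⊕ Fin n) ℂ)
      - (Amat n τ κ₁ κ₂ p L R).map Complex.ofReal).det = ∏ l, gval κ₁ κ₂ p (ν l) lam := by
    simp only [← eval_charpoly_eq_det_smul_one_sub, hcharpoly, eval_prod, eval_gpoly]
  refine ⟨hdet, fun μ => ?_⟩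
  simp only [IsRoot.def, eval_charpoly_eq_det_smul_one_sub, hdet, hν, eval_prod, eval_sub, eval_X,
    eval_C, Finset.prod_eq_zero_iff, Finset.mem_univ, true_and, sub_eq_zero]
  exact ⟨fun ⟨l, hl⟩ => ⟨ν l, ⟨l, rfl⟩, hl⟩, fun ⟨_, ⟨l, hνl⟩, hl⟩ => ⟨l, hνl ▸ hl⟩⟩

/-- If `ν₁,…,νₙ` are the roots (with multiplicity) of the characteristic polynomial of
`τ·L·R`, then `det(λ I₃ₙ − A) = ∏ₗ g_{νₗ}(λ)`; in particular `μ` is an eigenvalue of `A`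
iff `g_ν(μ) = 0` for some eigenvalue `ν` of `τ·L·R`. -/
theorem stmt1 (n : ℕ) (hn : 1 ≤ n) (τ κ₁ κ₂ p : ℝ)
    (L : Matrix (Fin n) (Fin n) ℝ) (r : Fin n → ℝ)
    (R : Matrix (Fin n) (Fin n) ℝ) (hR : R = Matrix.diagonal r)
    (ν : Fin n → ℂ)
    (hν : ((τ • (L * R)).map Complex.ofReal).charpoly = ∏ l : Fin n, (X - C (ν l))) :
    (∀ lam : ℂ,
      (lam • (1 : Matrix (Fin n ⊕ Fin n ⊕ Fin n) (Fin n ⊕ Fin n ⊕ Fin n) ℂ)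
          - (Amat n τ κ₁ κ₂ p L R).map Complex.ofReal).det
        = ∏ l : Fin n, gval κ₁ κ₂ p (ν l) lam) ∧
    (∀ μ : ℂ,
      ((Amat n τ κ₁ κ₂ p L R).map Complex.ofReal).charpoly.IsRoot μ ↔
        ∃ νe : ℂ, ((τ • (L * R)).map Complex.ofReal).charpoly.IsRoot νe ∧
          gval κ₁ κ₂ p νe μ = 0) :=
  stmt1_general n τ κ₁ κ₂ p L R ν hν
end

section
/- Assume L·1ₙ = 0, all diagonal entries rᵢ of R are nonzero, p ≠ 0 and τ ≠ 0. Define the vectors ζ₁ = (1ₙ; 0ₙ; 0ₙ), ζ₂ = (1ₙ; (1/τ)·R⁻¹1ₙ; 0ₙ), and ζ₃ = (−(τκ₂/p²)·1ₙ; (κ₂/p)·R⁻¹1ₙ; R⁻¹1ₙ) in ℝ^{3n}. Then A·ζ₁ = ζ₁, A·ζ₂ = ζ₂ + ζ₁, and A·ζ₃ = (1−p)·ζ₃; i.e., (ζ₁, ζ₂) is a right Jordan chain of A for the eigenvalue 1 and ζ₃ is a right eigenvector of A for the eigenvalue 1−p. -/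
open Matrix Polynomial

/-!
Applying `A` blockwise to `(a; b; c)` gives `(a + τRb; -κ₁La + b - κ₂c; -pLa + (1-p)c)`.
On the three vectors `a` is constant, so `La = 0`, and `b`, `c` are multiples of `R⁻¹1 = (rᵢ⁻¹)ᵢ`,
so `Rb` and `Rc` are constant; each identity reduces to scalar arithmetic in `τ`, `κ₂`, `p`.
-/

theorem mulVec_const_eq_zero {m ι K : Type*} [Fintype ι] [CommSemiring K] {L : Matrix m ι K}
    (hL : L *ᵥ (fun _ => 1) = 0) (c : K) :
    L *ᵥ (fun _ => c) = 0 := by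
  rw [show (fun _ => c) = c • fun _ : ι => (1 : K) by ext; simp, mulVec_smul, hL, smul_zero]

theorem diagonal_mulVec_const_mul_inv {ι K : Type*} [Fintype ι] [DecidableEq ι] [Field K] {r : ι → K}
    (hr : ∀ i, r i ≠ 0) (c : K) : diagonal r *ᵥ (fun i => c * (r i)⁻¹) = fun _ => c := by
  ext i
  rw [mulVec_diagonal, mul_left_comm, mul_inv_cancel₀ (hr i), mul_one]

theorem Amat_mulVec_sumElim (n : ℕ) (τ κ₁ κ₂ p : ℝ) (L R : Matrix (Fin n) (Fin n) ℝ)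
    (a b c : Fin n → ℝ) :
    Amat n τ κ₁ κ₂ p L R *ᵥ Sum.elim a (Sum.elim b c) =
      Sum.elim (a + τ • (R *ᵥ b))
        (Sum.elim (-κ₁ • (L *ᵥ a) + b - κ₂ • c) (-p • (L *ᵥ a) + (1 - p) • c)) := by
  simp only [Amat, fromBlocks_mulVec, fromCols_mulVec, fromRows_mulVec, ← Sum.elim_add_add,
    Sum.elim_comp_inl, Sum.elim_comp_inr, smul_mulVec, neg_mulVec, one_mulVec, zero_mulVec, add_zero,
    zero_add, sub_eq_add_neg, neg_smul, add_assoc]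

section

variable {n : ℕ} {τ κ₁ κ₂ p : ℝ} {L : Matrix (Fin n) (Fin n) ℝ} (hL : L *ᵥ (fun _ => 1) = 0)
include hL

theorem Amat_mulVec_zeta₁ (R : Matrix (Fin n) (Fin n) ℝ) :
    Amat n τ κ₁ κ₂ p L R *ᵥ Sum.elim (fun _ => 1) (Sum.elim (fun _ => 0) (fun _ => 0)) =
      Sum.elim (fun _ => 1) (Sum.elim (fun _ => 0) (fun _ => 0)) := by
  rw [Amat_mulVec_sumElim, hL, ← Pi.zero_def, mulVec_zero]
  ext (i | i | i) <;> simp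

theorem Amat_mulVec_zeta₂ {r : Fin n → ℝ} (hτ : τ ≠ 0) (hr : ∀ i, r i ≠ 0) :
    Amat n τ κ₁ κ₂ p L (diagonal r) *ᵥ
        Sum.elim (fun _ => 1) (Sum.elim (fun i => (1 / τ) * (r i)⁻¹) (fun _ => 0)) =
      Sum.elim (fun _ => 1) (Sum.elim (fun i => (1 / τ) * (r i)⁻¹) (fun _ => 0)) +
        Sum.elim (fun _ => 1) (Sum.elim (fun _ => 0) (fun _ => 0)) := by
  rw [Amat_mulVec_sumElim, hL, diagonal_mulVec_const_mul_inv hr]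
  ext (i | i | i) <;> simp [hτ]

theorem Amat_mulVec_zeta₃ {r : Fin n → ℝ} (hp : p ≠ 0) (hr : ∀ i, r i ≠ 0) :
    Amat n τ κ₁ κ₂ p L (diagonal r) *ᵥ
        Sum.elim (fun _ => -(τ * κ₂ / p ^ 2)) (Sum.elim (fun i => (κ₂ / p) * (r i)⁻¹) (fun i => (r i)⁻¹)) =
      (1 - p) • Sum.elim (fun _ => -(τ * κ₂ / p ^ 2))
        (Sum.elim (fun i => (κ₂ / p) * (r i)⁻¹) (fun i => (r i)⁻¹)) := by
  rw [Amat_mulVec_sumElim, mulVec_const_eq_zero hL, diagonal_mulVec_const_mul_inv hr]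
  ext (i | i | i) <;>
    simp only [Sum.elim_inl, Sum.elim_inr, Pi.add_apply, Pi.sub_apply, Pi.smul_apply, smul_eq_mul,
      smul_zero, zero_add]
  · field_simp
    ring
  · field_simp

end

theorem stmt3_general (n : ℕ) (τ κ₁ κ₂ p : ℝ) (hτ : τ ≠ 0) (hp : p ≠ 0)
    (L : Matrix (Fin n) (Fin n) ℝ) (r : Fin n → ℝ) (hr : ∀ i, r i ≠ 0)
    (R : Matrix (Fin n) (Fin n) ℝ) (hR : R = Matrix.diagonal r)
    (hL1 : L *ᵥ (fun _ => (1 : ℝ)) = 0)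
    (ζ₁ ζ₂ ζ₃ : (Fin n ⊕ Fin n ⊕ Fin n) → ℝ)
    (hζ₁ : ζ₁ = Sum.elim (fun _ => (1 : ℝ)) (Sum.elim (fun _ => 0) (fun _ => 0)))
    (hζ₂ : ζ₂ = Sum.elim (fun _ => (1 : ℝ))
      (Sum.elim (fun i => (1 / τ) * (r i)⁻¹) (fun _ => 0)))
    (hζ₃ : ζ₃ = Sum.elim (fun _ => -(τ * κ₂ / p ^ 2))
      (Sum.elim (fun i => (κ₂ / p) * (r i)⁻¹) (fun i => (r i)⁻¹))) :
    (Amat n τ κ₁ κ₂ p L R) *ᵥ ζ₁ = ζ₁ ∧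
    (Amat n τ κ₁ κ₂ p L R) *ᵥ ζ₂ = ζ₂ + ζ₁ ∧
    (Amat n τ κ₁ κ₂ p L R) *ᵥ ζ₃ = (1 - p) • ζ₃ := by
  subst hR hζ₁ hζ₂ hζ₃
  exact ⟨Amat_mulVec_zeta₁ hL1 _, Amat_mulVec_zeta₂ hL1 hτ hr, Amat_mulVec_zeta₃ hL1 hp hr⟩

/-- Right Jordan chain of `A` for the eigenvalue `1` and right eigenvector for `1 − p`
(right-eigenvector part of Lemma 2 of the paper):
`A ζ₁ = ζ₁`, `A ζ₂ = ζ₂ + ζ₁`, `A ζ₃ = (1−p) ζ₃` with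
`ζ₁ = (1ₙ; 0; 0)`, `ζ₂ = (1ₙ; (1/τ)R⁻¹1ₙ; 0)`,
`ζ₃ = (−(τκ₂/p²)1ₙ; (κ₂/p)R⁻¹1ₙ; R⁻¹1ₙ)`. -/
theorem stmt3 (n : ℕ) (hn : 1 ≤ n) (τ κ₁ κ₂ p : ℝ) (hτ : τ ≠ 0) (hp : p ≠ 0)
    (L : Matrix (Fin n) (Fin n) ℝ) (r : Fin n → ℝ) (hr : ∀ i, r i ≠ 0)
    (R : Matrix (Fin n) (Fin n) ℝ) (hR : R = Matrix.diagonal r)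
    (hL1 : L *ᵥ (fun _ => (1 : ℝ)) = 0)
    (ζ₁ ζ₂ ζ₃ : (Fin n ⊕ Fin n ⊕ Fin n) → ℝ)
    (hζ₁ : ζ₁ = Sum.elim (fun _ => (1 : ℝ)) (Sum.elim (fun _ => 0) (fun _ => 0)))
    (hζ₂ : ζ₂ = Sum.elim (fun _ => (1 : ℝ))
      (Sum.elim (fun i => (1 / τ) * (r i)⁻¹) (fun _ => 0)))
    (hζ₃ : ζ₃ = Sum.elim (fun _ => -(τ * κ₂ / p ^ 2))
      (Sum.elim (fun i => (κ₂ / p) * (r i)⁻¹) (fun i => (r i)⁻¹))) :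
    (Amat n τ κ₁ κ₂ p L R) *ᵥ ζ₁ = ζ₁ ∧
    (Amat n τ κ₁ κ₂ p L R) *ᵥ ζ₂ = ζ₂ + ζ₁ ∧
    (Amat n τ κ₁ κ₂ p L R) *ᵥ ζ₃ = (1 - p) • ζ₃ :=
  stmt3_general n τ κ₁ κ₂ p hτ hp L r hr R hR hL1 ζ₁ ζ₂ ζ₃ hζ₁ hζ₂ hζ₃
end

section
/- Assume all diagonal entries rᵢ of R are nonzero, p ≠ 0, and ξ ∈ ℝⁿ satisfies ξᵀL = 0 (ξ is a left null vector of L). Define η̂₁ = (R⁻¹ξ; −τξ; τκ₂(1/p + 1/p²)·ξ), η̂₂ = (0ₙ; τξ; −(τκ₂/p)·ξ), and η̂₃ = (0ₙ; 0ₙ; ξ) in ℝ^{3n}. Then η̂₂ᵀA = η̂₂ᵀ, η̂₁ᵀA = η̂₁ᵀ + η̂₂ᵀ, and η̂₃ᵀA = (1−p)·η̂₃ᵀ; i.e., (η̂₂, η̂₁) is a left Jordan chain of A for the eigenvalue 1 and η̂₃ is a left eigenvector of A for the eigenvalue 1−p. -/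
/-!
In block form `(x, y, z) ᵥ* A = (x - κ₁ • (y ᵥ* L) - p • (z ᵥ* L), τ • (x ᵥ* R) + y,
-κ₂ • y + (1 - p) • z)`. All three vectors have their second and third blocks proportional
to the left null vector `ξ` of `L`, so the `L`-terms vanish and each claim reduces to a scalar
identity per block; for `η̂₁` one also uses `(R⁻¹ξ) ᵥ* R = ξ`.
-/

open Matrix Polynomial

section VecMulAmat

variable {n : ℕ} (τ κ₁ κ₂ p : ℝ) {L : Matrix (Fin n) (Fin n) ℝ}

theorem sumElim_vecMul_Amat (R : Matrix (Fin n) (Fin n) ℝ) (x y z : Fin n → ℝ) :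
    Sum.elim x (Sum.elim y z) ᵥ* Amat n τ κ₁ κ₂ p L R =
      Sum.elim (x - κ₁ • (y ᵥ* L) - p • (z ᵥ* L))
        (Sum.elim (τ • (x ᵥ* R) + y) (-κ₂ • y + (1 - p) • z)) := by
  simp only [Amat, vecMul_fromBlocks, Sum.elim_comp_inl, Sum.elim_comp_inr, vecMul_fromCols,
    sumElim_vecMul_fromRows, vecMul_one, vecMul_smul, vecMul_zero]
  ext (i | i | i)
  all_goals simp
  all_goals ring

theorem sumElim_vecMul_Amat_of_vecMul_eq_zero (R : Matrix (Fin n) (Fin n) ℝ) (x : Fin n → ℝ)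
    {y z : Fin n → ℝ} (hy : y ᵥ* L = 0) (hz : z ᵥ* L = 0) :
    Sum.elim x (Sum.elim y z) ᵥ* Amat n τ κ₁ κ₂ p L R =
      Sum.elim x (Sum.elim (τ • (x ᵥ* R) + y) (-κ₂ • y + (1 - p) • z)) := by
  simp [sumElim_vecMul_Amat, hy, hz]

theorem sumElim_zero_zero_vecMul_Amat {ξ : Fin n → ℝ} (hξ : ξ ᵥ* L = 0)
    (R : Matrix (Fin n) (Fin n) ℝ) :
    Sum.elim (0 : Fin n → ℝ) (Sum.elim 0 ξ) ᵥ* Amat n τ κ₁ κ₂ p L R =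
      (1 - p) • Sum.elim (0 : Fin n → ℝ) (Sum.elim 0 ξ) := by
  rw [sumElim_vecMul_Amat_of_vecMul_eq_zero _ _ _ _ _ _ (zero_vecMul L) hξ]
  ext (i | i | i)
  all_goals simp

theorem sumElim_zero_smul_vecMul_Amat {ξ : Fin n → ℝ} (hξ : ξ ᵥ* L = 0) (hp : p ≠ 0)
    (R : Matrix (Fin n) (Fin n) ℝ) :
    Sum.elim (0 : Fin n → ℝ) (Sum.elim (τ • ξ) ((-(τ * κ₂ / p)) • ξ)) ᵥ* Amat n τ κ₁ κ₂ p L R =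
      Sum.elim (0 : Fin n → ℝ) (Sum.elim (τ • ξ) ((-(τ * κ₂ / p)) • ξ)) := by
  rw [sumElim_vecMul_Amat_of_vecMul_eq_zero _ _ _ _ _ _ (by rw [smul_vecMul, hξ, smul_zero])
    (by rw [smul_vecMul, hξ, smul_zero])]
  ext (i | i | i)
  all_goals simp
  field_simp
  ring

theorem sumElim_inv_mul_smul_vecMul_Amat {ξ : Fin n → ℝ} (hξ : ξ ᵥ* L = 0) (hp : p ≠ 0)
    {r : Fin n → ℝ} (hr : ∀ i, r i ≠ 0) :
    Sum.elim (r⁻¹ * ξ : Fin n → ℝ) (Sum.elim ((-τ) • ξ) ((τ * κ₂ * (1 / p + 1 / p ^ 2)) • ξ)) ᵥ*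
        Amat n τ κ₁ κ₂ p L (diagonal r) =
      Sum.elim (r⁻¹ * ξ : Fin n → ℝ) (Sum.elim ((-τ) • ξ) ((τ * κ₂ * (1 / p + 1 / p ^ 2)) • ξ)) +
        Sum.elim (0 : Fin n → ℝ) (Sum.elim (τ • ξ) ((-(τ * κ₂ / p)) • ξ)) := by
  have hR : (r⁻¹ * ξ : Fin n → ℝ) ᵥ* diagonal r = ξ := by
    ext i
    rw [vecMul_diagonal, Pi.mul_apply, Pi.inv_apply, mul_right_comm, inv_mul_cancel₀ (hr i),
      one_mul]
  rw [sumElim_vecMul_Amat_of_vecMul_eq_zero _ _ _ _ _ _ (by rw [smul_vecMul, hξ, smul_zero])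
    (by rw [smul_vecMul, hξ, smul_zero]), hR]
  ext (i | i | i)
  all_goals simp
  field_simp
  ring

end VecMulAmat

theorem stmt4_general (n : ℕ) (τ κ₁ κ₂ p : ℝ) (hp : p ≠ 0)
    (L : Matrix (Fin n) (Fin n) ℝ) (r : Fin n → ℝ) (hr : ∀ i, r i ≠ 0)
    (R : Matrix (Fin n) (Fin n) ℝ) (hR : R = Matrix.diagonal r)
    (ξ : Fin n → ℝ) (hξ : ξ ᵥ* L = 0)
    (η₁ η₂ η₃ : (Fin n ⊕ Fin n ⊕ Fin n) → ℝ)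
    (hη₁ : η₁ = Sum.elim (fun i => (r i)⁻¹ * ξ i)
      (Sum.elim (fun i => -τ * ξ i) (fun i => τ * κ₂ * (1 / p + 1 / p ^ 2) * ξ i)))
    (hη₂ : η₂ = Sum.elim (fun _ => 0)
      (Sum.elim (fun i => τ * ξ i) (fun i => -(τ * κ₂ / p) * ξ i)))
    (hη₃ : η₃ = Sum.elim (fun _ => 0) (Sum.elim (fun _ => 0) (fun i => ξ i))) :
    η₂ ᵥ* (Amat n τ κ₁ κ₂ p L R) = η₂ ∧
    η₁ ᵥ* (Amat n τ κ₁ κ₂ p L R) = η₁ + η₂ ∧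
    η₃ ᵥ* (Amat n τ κ₁ κ₂ p L R) = (1 - p) • η₃ := by
  replace hη₁ : η₁ = Sum.elim (r⁻¹ * ξ : Fin n → ℝ)
      (Sum.elim ((-τ) • ξ) ((τ * κ₂ * (1 / p + 1 / p ^ 2)) • ξ)) := hη₁
  replace hη₂ : η₂ = Sum.elim (0 : Fin n → ℝ) (Sum.elim (τ • ξ) ((-(τ * κ₂ / p)) • ξ)) := hη₂
  replace hη₃ : η₃ = Sum.elim (0 : Fin n → ℝ) (Sum.elim 0 ξ) := hη₃
  subst hR hη₁ hη₂ hη₃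
  exact ⟨sumElim_zero_smul_vecMul_Amat τ κ₁ κ₂ p hξ hp _,
    sumElim_inv_mul_smul_vecMul_Amat τ κ₁ κ₂ p hξ hp hr,
    sumElim_zero_zero_vecMul_Amat τ κ₁ κ₂ p hξ _⟩

/-- Left Jordan chain of `A` for the eigenvalue `1` and left eigenvector for `1 − p`
(left-eigenvector part of Lemma 2 of the paper): with `ξᵀL = 0`,
`η̂₂ᵀA = η̂₂ᵀ`, `η̂₁ᵀA = η̂₁ᵀ + η̂₂ᵀ`, `η̂₃ᵀA = (1−p)η̂₃ᵀ` where
`η̂₁ = (R⁻¹ξ; −τξ; τκ₂(1/p+1/p²)ξ)`, `η̂₂ = (0; τξ; −(τκ₂/p)ξ)`, `η̂₃ = (0; 0; ξ)`. -/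
theorem stmt4 (n : ℕ) (hn : 1 ≤ n) (τ κ₁ κ₂ p : ℝ) (hp : p ≠ 0)
    (L : Matrix (Fin n) (Fin n) ℝ) (r : Fin n → ℝ) (hr : ∀ i, r i ≠ 0)
    (R : Matrix (Fin n) (Fin n) ℝ) (hR : R = Matrix.diagonal r)
    (ξ : Fin n → ℝ) (hξ : ξ ᵥ* L = 0)
    (η₁ η₂ η₃ : (Fin n ⊕ Fin n ⊕ Fin n) → ℝ)
    (hη₁ : η₁ = Sum.elim (fun i => (r i)⁻¹ * ξ i)
      (Sum.elim (fun i => -τ * ξ i) (fun i => τ * κ₂ * (1 / p + 1 / p ^ 2) * ξ i)))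
    (hη₂ : η₂ = Sum.elim (fun _ => 0)
      (Sum.elim (fun i => τ * ξ i) (fun i => -(τ * κ₂ / p) * ξ i)))
    (hη₃ : η₃ = Sum.elim (fun _ => 0) (Sum.elim (fun _ => 0) (fun i => ξ i))) :
    η₂ ᵥ* (Amat n τ κ₁ κ₂ p L R) = η₂ ∧
    η₁ ᵥ* (Amat n τ κ₁ κ₂ p L R) = η₁ + η₂ ∧
    η₃ ᵥ* (Amat n τ κ₁ κ₂ p L R) = (1 - p) • η₃ :=
  stmt4_general n τ κ₁ κ₂ p hp L r hr R hR ξ hξ η₁ η₂ η₃ hη₁ hη₂ hη₃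
end

section
/- Assume all diagonal entries rᵢ of R are nonzero, p ≠ 0, τ ≠ 0, ξ ∈ ℝⁿ satisfies Σᵢ ξᵢ/rᵢ ≠ 0, and set γ = (Σᵢ ξᵢ/rᵢ)⁻¹, i.e. γ·ξᵀR⁻¹1ₙ = 1. With ζ₁ = (1ₙ; 0ₙ; 0ₙ), ζ₂ = (1ₙ; (1/τ)R⁻¹1ₙ; 0ₙ), ζ₃ = (−(τκ₂/p²)1ₙ; (κ₂/p)R⁻¹1ₙ; R⁻¹1ₙ) and η₁ = γ(R⁻¹ξ; −τξ; τκ₂(1/p+1/p²)ξ), η₂ = γ(0ₙ; τξ; −(τκ₂/p)ξ), η₃ = γ(0ₙ; 0ₙ; ξ), the biorthonormality relations ηᵢᵀζⱼ = 1 if i = j and ηᵢᵀζⱼ = 0 if i ≠ j hold for all i, j ∈ {1, 2, 3}. -/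
open Matrix

/-- Biorthonormality of the Jordan chains of Lemma 2 of the paper:
with `γ = (Σᵢ ξᵢ/rᵢ)⁻¹`, the vectors `ζ₁, ζ₂, ζ₃` and `η₁, η₂, η₃` satisfy
`ηᵢᵀζⱼ = δᵢⱼ`. -/
theorem stmt5 (n : ℕ) (hn : 1 ≤ n) (τ κ₂ p : ℝ) (hτ : τ ≠ 0) (hp : p ≠ 0)
    (r : Fin n → ℝ) (hr : ∀ i, r i ≠ 0)
    (ξ : Fin n → ℝ) (hξr : ∑ i, ξ i / r i ≠ 0)
    (γ : ℝ) (hγ : γ = (∑ i, ξ i / r i)⁻¹)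
    (ζ η : Fin 3 → (Fin n ⊕ Fin n ⊕ Fin n) → ℝ)
    (hζ : ζ = ![Sum.elim (fun _ => (1 : ℝ)) (Sum.elim (fun _ => 0) (fun _ => 0)),
      Sum.elim (fun _ => (1 : ℝ))
        (Sum.elim (fun i => (1 / τ) * (r i)⁻¹) (fun _ => 0)),
      Sum.elim (fun _ => -(τ * κ₂ / p ^ 2))
        (Sum.elim (fun i => (κ₂ / p) * (r i)⁻¹) (fun i => (r i)⁻¹))])
    (hη : η = ![fun v => γ * Sum.elim (fun i => (r i)⁻¹ * ξ i)
        (Sum.elim (fun i => -τ * ξ i)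
          (fun i => τ * κ₂ * (1 / p + 1 / p ^ 2) * ξ i)) v,
      fun v => γ * Sum.elim (fun _ => 0)
        (Sum.elim (fun i => τ * ξ i) (fun i => -(τ * κ₂ / p) * ξ i)) v,
      fun v => γ * Sum.elim (fun _ => 0)
        (Sum.elim (fun _ => 0) (fun i => ξ i)) v]) :
    ∀ i j : Fin 3, η i ⬝ᵥ ζ j = if i = j then 1 else 0 := by
  have hS : γ * ∑ i, ξ i / r i = 1 := by
    rw [hγ]; exact inv_mul_cancel₀ hξr
  have key : ∀ c : ℝ, ∑ i, c * (γ * (ξ i / r i)) = c := by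
    intro c
    calc ∑ i, c * (γ * (ξ i / r i)) = c * γ * ∑ i, ξ i / r i := by
          rw [Finset.mul_sum]; exact Finset.sum_congr rfl fun i _ => by ring
      _ = c := by rw [mul_assoc, hS, mul_one]
  subst hζ hη
  intro i j
  fin_cases i <;> fin_cases j <;>
    simp only [dotProduct, Fintype.sum_sum_type, Sum.elim_inl, Sum.elim_inr,
      Fin.isValue, Matrix.cons_val_zero, Matrix.cons_val_one, Matrix.head_cons,
      Fin.mk_zero, Fin.mk_one, Matrix.cons_val_two, Matrix.tail_cons,
      mul_zero, zero_mul, mul_one, Finset.sum_const_zero, add_zero, zero_add,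
      Fin.zero_eta, Fin.mk_one, show ((⟨2, by norm_num⟩ : Fin 3) = 2) from rfl] <;>
    norm_num
  all_goals try simp
  all_goals try simp only [← Finset.sum_neg_distrib, ← Finset.sum_add_distrib]
  all_goals first
    | (refine Eq.trans (Finset.sum_congr rfl fun i _ => ?_) (key 1)
       first
       | (field_simp [hr i]; ring)
       | field_simp [hr i]
       | (rw [div_eq_mul_inv]; ring))
    | (refine Finset.sum_eq_zero fun i _ => ?_
       first
       | (field_simp [hr i]; ring)
       | field_simp [hr i])
end

section
/- Assume n ≥ 2, all rᵢ > 0, τ > 0, L·1ₙ = 0 and the kernel of L is exactly the span of 1ₙ. Suppose the algorithm synchronizes from every initial condition: for every z₀ ∈ ℝⁿ×ℝⁿ×ℝⁿ there exist real numbers r* and x* such that the trajectory z_k = A^k z₀ = (x_k, s_k, y_k) satisfies x_k − k·τ·r*·1ₙ → x*·1ₙ, s_k → r*·R⁻¹1ₙ, and y_k → 0ₙ as k → ∞. Then κ₁ ≠ κ₂, p > 0, the eigenvalue 1 of A has algebraic multiplicity exactly 2, and every other complex eigenvalue μ of A satisfies |μ| < 1. -/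
open Matrix Polynomial Filter

/-!
Synchronization makes every coordinate of every trajectory `A ^ k *ᵥ z` affine in `k` up to a
convergent error, so second differences vanish: `A ^ k * (A - 1) ^ 2 → 0`. Applied to an
eigenvector for `μ ≠ 1` this gives `μ ^ k (μ - 1) ^ 2 → 0`, i.e. `‖μ‖ < 1`. A generalized
eigenvector of `1` whose orbit tends to `0` is `0`, so the generalized eigenspace of `1` is
`ker (A - 1) ^ 2`.

The signs of the parameters come from explicit trajectories: starting from `(0, 0, R⁻¹1)` the
`y`-part is `(1 - p) ^ k R⁻¹1`, which forces `|1 - p| < 1`; if `κ₁ = κ₂` then `(x, 0, -L x)` is a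
fixed point whose `y`-part `-L x` is nonzero for non-constant `x`. Once `p ≠ 0` and `κ₁ ≠ κ₂`, the fixed points
of `A` are the multiples of `(1, 0, 0)`, and `(A - 1) (0, τ⁻¹R⁻¹1, 0) = (1, 0, 0)` is a Jordan
chain of length two, so `ker (A - 1) ^ 2` has dimension `2`.
-/

open Topology

theorem tendsto_secondDiff_of_tendsto_sub_nsmul {E : Type*} [AddCommGroup E] [TopologicalSpace E]
    [IsTopologicalAddGroup E] {u : ℕ → E} {c l : E}
    (h : Tendsto (fun k => u k - k • c) atTop (𝓝 l)) :
    Tendsto (fun k => u (k + 2) - 2 • u (k + 1) + u k) atTop (𝓝 0) := by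
  have h1 := h.comp (tendsto_add_atTop_nat 1)
  have h2 := ((h.comp (tendsto_add_atTop_nat 2)).sub h1).sub (h1.sub h)
  rw [sub_self] at h2
  refine h2.congr fun k => ?_
  simp only [Function.comp_apply, add_smul, one_smul, two_smul]
  abel

namespace Matrix

variable {ι : Type*} [Fintype ι] [DecidableEq ι]

theorem tendsto_of_forall_tendsto_mulVec {α m R : Type*} [NonAssocSemiring R] [TopologicalSpace R]
    {l : Filter α} {B : α → Matrix m ι R} {M : Matrix m ι R}
    (h : ∀ v, Tendsto (fun k => B k *ᵥ v) l (𝓝 (M *ᵥ v))) : Tendsto B l (𝓝 M) := by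
  refine tendsto_pi_nhds.2 fun i => tendsto_pi_nhds.2 fun j => ?_
  simpa [mulVec_single_one] using tendsto_pi_nhds.1 (h (Pi.single j 1)) i

theorem tendsto_pow_mul_sub_one_sq {R : Type*} [Ring R] [TopologicalSpace R]
    [IsTopologicalRing R] {A : Matrix ι ι R}
    (h : ∀ z j, ∃ c l : R, Tendsto (fun k => (A ^ k *ᵥ z) j - k • c) atTop (𝓝 l)) :
    Tendsto (fun k => A ^ k * (A - 1) ^ 2) atTop (𝓝 0) := by
  refine tendsto_of_forall_tendsto_mulVec fun z => ?_
  rw [zero_mulVec]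
  refine tendsto_pi_nhds.2 fun j => ?_
  obtain ⟨c, l, hj⟩ := h z j
  refine (tendsto_secondDiff_of_tendsto_sub_nsmul hj).congr fun k => ?_
  have : A ^ k * (A - 1) ^ 2 = A ^ (k + 2) - 2 • A ^ (k + 1) + A ^ k := by
    simp only [pow_add, two_nsmul]; noncomm_ring
  simp only [this, add_mulVec, sub_mulVec, two_nsmul, Pi.add_apply, Pi.sub_apply]

omit [DecidableEq ι] in
theorem map_ofReal_mulVec_ofReal {m : Type*} (M : Matrix m ι ℝ) (v : ι → ℝ) :
    M.map Complex.ofReal *ᵥ (Complex.ofReal ∘ v) = Complex.ofReal ∘ (M *ᵥ v) :=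
  funext fun i => (RingHom.map_mulVec Complex.ofRealHom M v i).symm

theorem ker_toLin'_map_ofReal {m : Type*} {M : Matrix m ι ℝ} {e : ι → ℝ}
    (h : LinearMap.ker (toLin' M) = ℝ ∙ e) :
    LinearMap.ker (toLin' (M.map Complex.ofReal)) = ℂ ∙ (Complex.ofReal ∘ e) := by
  have hdecomp : ∀ v : ι → ℂ,
      v = Complex.ofReal ∘ (Complex.re ∘ v) + Complex.I • Complex.ofReal ∘ (Complex.im ∘ v) :=
    fun v => funext fun i => by simpa [mul_comm] using (Complex.re_add_im (v i)).symm
  have hker : ∀ w, M *ᵥ w = 0 ↔ ∃ c : ℝ, c • e = w := fun w => by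
    rw [← toLin'_apply, ← LinearMap.mem_ker, h, Submodule.mem_span_singleton]
  ext v
  rw [LinearMap.mem_ker, toLin'_apply, Submodule.mem_span_singleton]
  constructor
  · intro hv
    rw [hdecomp v, mulVec_add, mulVec_smul, map_ofReal_mulVec_ofReal, map_ofReal_mulVec_ofReal]
      at hv
    obtain ⟨a, ha⟩ :=
      (hker _).1 (funext fun i => by simpa using congrArg Complex.re (congrFun hv i))
    obtain ⟨b, hb⟩ :=
      (hker _).1 (funext fun i => by simpa using congrArg Complex.im (congrFun hv i))
    refine ⟨a + b * Complex.I, ?_⟩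
    rw [hdecomp v, ← ha, ← hb]
    ext i
    simp only [Pi.smul_apply, Function.comp_apply, smul_eq_mul, Pi.add_apply, Complex.ofReal_mul]
    ring
  · rintro ⟨c, rfl⟩
    have he : M *ᵥ e = 0 := (hker e).2 ⟨1, one_smul ℝ e⟩
    rw [mulVec_smul, map_ofReal_mulVec_ofReal, he]
    ext; simp

theorem tendsto_toLin'_map_ofReal_pow_mul_sub_one_sq_apply {M : Matrix ι ι ℝ}
    (h : Tendsto (fun k => M ^ k * (M - 1) ^ 2) atTop (𝓝 0)) (v : ι → ℂ) :
    Tendsto (fun k => (toLin' (M.map Complex.ofReal) ^ k * (toLin' (M.map Complex.ofReal) - 1) ^ 2 :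
      Module.End ℂ (ι → ℂ)) v) atTop (𝓝 0) := by
  have hmap : ∀ k, (toLin' (M.map Complex.ofReal) ^ k * (toLin' (M.map Complex.ofReal) - 1) ^ 2 :
      Module.End ℂ (ι → ℂ)) = toLin' ((M ^ k * (M - 1) ^ 2).map Complex.ofReal) := fun k => by
    change _ = toLinAlgEquiv' (Complex.ofRealHom.mapMatrix (M ^ k * (M - 1) ^ 2))
    simp only [map_mul, map_pow, map_sub, map_one]
    rfl
  have hc : Continuous fun N : Matrix ι ι ℝ => N.map Complex.ofReal *ᵥ v :=
    (continuous_id.matrix_map Complex.continuous_ofReal).matrix_mulVec continuous_const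
  simpa [hmap, Function.comp_def] using (hc.tendsto 0).comp h

end Matrix

namespace Module.End

section Topological

variable {R V : Type*} [CommRing R] [AddCommGroup V] [Module R V] [TopologicalSpace V]
  [IsTopologicalAddGroup V] [T2Space V]

theorem eq_zero_of_mem_maxGenEigenspace_one_of_tendsto {f : End R V} {w : V}
    (hw : w ∈ f.maxGenEigenspace 1) (h : Tendsto (fun k => (f ^ k) w) atTop (𝓝 0)) : w = 0 := by
  obtain ⟨m, hm⟩ := (f.mem_maxGenEigenspace 1 w).1 hw
  rw [one_smul] at hm
  induction m generalizing w with
  | zero => simpa using hm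
  | succ m ih =>
    -- `(f - 1) w` is a decaying generalized eigenvector of lower order, hence `0`
    have hfix : f w = w := by
      refine sub_eq_zero.1 (ih (w := (f - 1) w) ?_ ?_ ?_)
      · exact (f.mem_maxGenEigenspace 1 _).2 ⟨m + 1, by
          rw [one_smul, ← Module.End.mul_apply, ← pow_succ, pow_succ', Module.End.mul_apply, hm,
            map_zero]⟩
      · have := ((h.comp (tendsto_add_atTop_nat 1)).sub h)
        rw [sub_zero] at this
        refine this.congr fun k => ?_
        simp [pow_succ, sub_eq_add_neg]
      · rwa [← Module.End.mul_apply, ← pow_succ]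
    have : ∀ k, (f ^ k) w = w := fun k => by
      induction k with
      | zero => rfl
      | succ k ihk => rw [pow_succ, Module.End.mul_apply, hfix, ihk]
    simp only [this] at h
    exact tendsto_nhds_unique tendsto_const_nhds h

theorem maxGenEigenspace_one_eq_ker_sq {f : End R V}
    (h : ∀ v, Tendsto (fun k => (f ^ k * (f - 1) ^ 2 : End R V) v) atTop (𝓝 0)) :
    f.maxGenEigenspace 1 = LinearMap.ker ((f - 1) ^ 2 : End R V) := by
  apply le_antisymm
  · intro u hu
    obtain ⟨m, hm⟩ := (f.mem_maxGenEigenspace 1 u).1 hu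
    rw [one_smul] at hm
    refine eq_zero_of_mem_maxGenEigenspace_one_of_tendsto ?_ (h u)
    refine (f.mem_maxGenEigenspace 1 _).2 ⟨m, ?_⟩
    rw [one_smul, ← Module.End.mul_apply, ← pow_add, add_comm, pow_add, Module.End.mul_apply, hm,
      map_zero]
  · intro u hu
    exact (f.mem_maxGenEigenspace 1 u).2 ⟨2, by rwa [one_smul]⟩

end Topological

theorem norm_lt_one_of_hasEigenvalue {𝕜 V : Type*} [NormedField 𝕜]
    [NormedAddCommGroup V] [NormedSpace 𝕜 V] {f : Module.End 𝕜 V}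
    (h : ∀ v, Tendsto (fun k => (f ^ k * (f - 1) ^ 2 : End 𝕜 V) v) atTop (𝓝 0)) {μ : 𝕜}
    (hμ : f.HasEigenvalue μ) (hμ1 : μ ≠ 1) : ‖μ‖ < 1 := by
  obtain ⟨u, hu⟩ := hμ.exists_hasEigenvector
  have hsub : (f - 1) u = (μ - 1) • u := by simp [hu.apply_eq_smul, sub_smul]
  have hiter : ∀ k, (f ^ k * (f - 1) ^ 2 : End 𝕜 V) u = (μ ^ k * (μ - 1) ^ 2) • u := fun k => by
    rw [pow_two, Module.End.mul_apply, Module.End.mul_apply, hsub, map_smul, hsub, map_smul,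
      map_smul, hu.pow_apply, smul_smul, smul_smul, pow_two]
    ring_nf
  have hc : ‖(μ - 1) ^ 2‖ * ‖u‖ ≠ 0 :=
    mul_ne_zero (norm_ne_zero_iff.2 (pow_ne_zero 2 (sub_ne_zero.2 hμ1))) (norm_ne_zero_iff.2 hu.2)
  have hnorm : Tendsto (fun k => ‖μ‖ ^ k * (‖(μ - 1) ^ 2‖ * ‖u‖)) atTop (𝓝 0) := by
    simpa only [hiter, norm_smul, norm_mul, norm_pow, mul_assoc, norm_zero] using (h u).norm
  have hpow : Tendsto (fun k => ‖μ‖ ^ k) atTop (𝓝 0) := by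
    have := hnorm.mul_const (‖(μ - 1) ^ 2‖ * ‖u‖)⁻¹
    rw [zero_mul] at this
    exact this.congr fun k => mul_inv_cancel_right₀ hc _
  simpa using hpow

section JordanChain

variable {K V : Type*} [Field K] [AddCommGroup V] [Module K V] {g : End K V} {e z : V}

theorem ker_sq_eq_span_pair (hker : LinearMap.ker g = K ∙ e) (hz : g z = e) :
    LinearMap.ker (g ^ 2) = Submodule.span K {e, z} := by
  have hge : g e = 0 := by
    rw [← LinearMap.mem_ker, hker]; exact Submodule.mem_span_singleton_self e
  apply le_antisymm
  · intro u hu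
    rw [LinearMap.mem_ker, pow_two, Module.End.mul_apply, ← LinearMap.mem_ker, hker,
      Submodule.mem_span_singleton] at hu
    obtain ⟨c, hc⟩ := hu
    have : u - c • z ∈ LinearMap.ker g := by
      rw [LinearMap.mem_ker, map_sub, map_smul, hz, hc, sub_self]
    rw [hker, Submodule.mem_span_singleton] at this
    obtain ⟨d, hd⟩ := this
    rw [Submodule.mem_span_pair]
    exact ⟨d, c, by rw [hd, sub_add_cancel]⟩
  · rw [Submodule.span_le, Set.insert_subset_iff, Set.singleton_subset_iff]
    simp [pow_two, hge, hz]

theorem finrank_ker_sq_eq_two (hker : LinearMap.ker g = K ∙ e) (hz : g z = e) (he : e ≠ 0) :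
    Module.finrank K (LinearMap.ker (g ^ 2)) = 2 := by
  have hge : g e = 0 := by
    rw [← LinearMap.mem_ker, hker]; exact Submodule.mem_span_singleton_self e
  have hli : LinearIndependent K ![e, z] := by
    rw [LinearIndependent.pair_iff]
    intro a b hab
    have hb : b = 0 := by
      have := congrArg g hab
      simp only [map_add, map_smul, hge, hz, smul_zero, zero_add, map_zero] at this
      exact (smul_eq_zero.1 this).resolve_right he
    subst hb
    exact ⟨(smul_eq_zero.1 (by simpa using hab)).resolve_right he, rfl⟩
  rw [ker_sq_eq_span_pair hker hz, ← Matrix.range_cons_cons_empty e z ![],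
    finrank_span_eq_card hli, Fintype.card_fin]

end JordanChain

end Module.End

theorem exists_mulVec_apply_ne_zero {n : ℕ} {L : Matrix (Fin n) (Fin n) ℝ} (hn : 2 ≤ n)
    (hker : ∀ v : Fin n → ℝ, L *ᵥ v = 0 → ∃ c : ℝ, v = fun _ => c) :
    ∃ x : Fin n → ℝ, ∃ i, (L *ᵥ x) i ≠ 0 := by
  by_contra! h
  obtain ⟨c, hc⟩ := hker (Pi.single ⟨0, by omega⟩ 1) (funext (h _))
  have h0 : (1 : ℝ) = c := by simpa using congrFun hc ⟨0, by omega⟩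
  have h1 : (0 : ℝ) = c := by simpa [Pi.single_apply, Fin.ext_iff] using congrFun hc ⟨1, by omega⟩
  exact one_ne_zero (h0.trans h1.symm)

section Amat

variable {n : ℕ} {τ κ₁ κ₂ p : ℝ} {L R : Matrix (Fin n) (Fin n) ℝ}

theorem Amat_mulVec (x s y : Fin n → ℝ) :
    Amat n τ κ₁ κ₂ p L R *ᵥ Sum.elim x (Sum.elim s y) =
      Sum.elim (x + τ • (R *ᵥ s))
        (Sum.elim (s - κ₁ • (L *ᵥ x) - κ₂ • y) ((1 - p) • y - p • (L *ᵥ x))) := by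
  simp only [Amat, fromBlocks_mulVec, fromCols_mulVec_sumElim, fromRows_mulVec, Sum.elim_comp_inl,
    Sum.elim_comp_inr, smul_mulVec, one_mulVec, zero_mulVec]
  ext (i | i | i) <;>
    simp only [add_zero, neg_smul, zero_add, Sum.elim_inl, Sum.elim_inr, Pi.add_apply,
      Pi.neg_apply, Pi.smul_apply, Pi.sub_apply, smul_eq_mul] <;>
    ring

/-- `blockVec r a b c` is `(a·1, b·R⁻¹1, c·R⁻¹1)`. These vectors form an `A`-invariant subspace on
which `A` acts by the triangular matrix `[[1, τ, 0], [0, 1, -κ₂], [0, 0, 1 - p]]`. -/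
noncomputable def blockVec (r : Fin n → ℝ) (a b c : ℝ) : Fin n ⊕ Fin n ⊕ Fin n → ℝ :=
  Sum.elim (fun _ => a) (Sum.elim (fun i => b / r i) (fun i => c / r i))

theorem Amat_mulVec_blockVec {r : Fin n → ℝ} (hr : ∀ i, r i ≠ 0)
    (hL1 : L *ᵥ (fun _ => (1 : ℝ)) = 0) (a b c : ℝ) :
    Amat n τ κ₁ κ₂ p L (diagonal r) *ᵥ blockVec r a b c =
      blockVec r (a + τ * b) (b - κ₂ * c) ((1 - p) * c) := by
  have hLa : L *ᵥ (fun _ => a) = 0 := by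
    rw [show (fun _ => a) = a • fun _ => (1 : ℝ) by ext; simp, mulVec_smul, hL1, smul_zero]
  simp only [blockVec, Amat_mulVec, hLa]
  ext (i | i | i) <;>
    simp only [Sum.elim_inl, Sum.elim_inr, Pi.add_apply, Pi.sub_apply, Pi.smul_apply, Pi.zero_apply,
      mulVec_diagonal, smul_eq_mul] <;>
    field_simp [hr i] <;> ring

theorem Amat_pow_mulVec_blockVec {r : Fin n → ℝ} (hr : ∀ i, r i ≠ 0)
    (hL1 : L *ᵥ (fun _ => (1 : ℝ)) = 0) (k : ℕ) :
    ∃ a b : ℝ, Amat n τ κ₁ κ₂ p L (diagonal r) ^ k *ᵥ blockVec r 0 0 1 =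
      blockVec r a b ((1 - p) ^ k) := by
  induction k with
  | zero => exact ⟨0, 0, by simp⟩
  | succ k ih =>
    obtain ⟨a, b, hab⟩ := ih
    refine ⟨a + τ * b, b - κ₂ * (1 - p) ^ k, ?_⟩
    rw [pow_succ', ← mulVec_mulVec, hab, Amat_mulVec_blockVec hr hL1, pow_succ']

theorem ker_Amat_sub_one {r : Fin n → ℝ} (hp : p ≠ 0) (hκ : κ₁ ≠ κ₂) (hτ : τ ≠ 0)
    (hr : ∀ i, r i ≠ 0) (hL1 : L *ᵥ (fun _ => (1 : ℝ)) = 0)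
    (hker : ∀ v : Fin n → ℝ, L *ᵥ v = 0 → ∃ c : ℝ, v = fun _ => c) :
    LinearMap.ker (toLin' (Amat n τ κ₁ κ₂ p L (diagonal r) - 1)) = ℝ ∙ blockVec r 1 0 0 := by
  ext v
  rw [LinearMap.mem_ker, toLin'_apply, sub_mulVec, one_mulVec, sub_eq_zero,
    Submodule.mem_span_singleton]
  constructor
  · intro hv
    rw [← Sum.elim_comp_inl_inr v, ← Sum.elim_comp_inl_inr (v ∘ Sum.inr)] at hv ⊢
    set x := v ∘ Sum.inl
    set s := (v ∘ Sum.inr) ∘ Sum.inl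
    set y := (v ∘ Sum.inr) ∘ Sum.inr
    rw [Amat_mulVec] at hv
    have hx := fun i => congrFun hv (Sum.inl i)
    have hs := fun i => congrFun hv (Sum.inr (Sum.inl i))
    have hy := fun i => congrFun hv (Sum.inr (Sum.inr i))
    simp only [Sum.elim_inl, Sum.elim_inr, Pi.add_apply, Pi.sub_apply, Pi.smul_apply,
      mulVec_diagonal, smul_eq_mul] at hx hs hy
    have hs0 : ∀ i, s i = 0 := fun i => by
      simpa [hτ, hr i] using hx i
    have hLy : ∀ i, (L *ᵥ x) i = - y i := fun i => by
      have : p * ((L *ᵥ x) i + y i) = 0 := by linear_combination -(hy i)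
      linear_combination (mul_eq_zero.1 this).resolve_left hp
    have hy0 : ∀ i, y i = 0 := fun i => by
      have : (κ₁ - κ₂) * y i = 0 := by linear_combination hs i + κ₁ * hLy i
      exact (mul_eq_zero.1 this).resolve_left (sub_ne_zero.2 hκ)
    obtain ⟨c, hc⟩ := hker x (funext fun i => by simp [hLy, hy0])
    refine ⟨c, ?_⟩
    ext (i | i | i) <;> simp [blockVec, hc, hs0, hy0]
  · rintro ⟨c, rfl⟩
    rw [mulVec_smul, Amat_mulVec_blockVec hr hL1]
    norm_num

theorem Amat_sub_one_mulVec_blockVec {r : Fin n → ℝ} (hτ : τ ≠ 0) (hr : ∀ i, r i ≠ 0)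
    (hL1 : L *ᵥ (fun _ => (1 : ℝ)) = 0) :
    (Amat n τ κ₁ κ₂ p L (diagonal r) - 1) *ᵥ blockVec r 0 τ⁻¹ 0 = blockVec r 1 0 0 := by
  rw [sub_mulVec, one_mulVec, Amat_mulVec_blockVec hr hL1]
  ext (i | i | i) <;> simp [blockVec, hτ]

end Amat

def Synchronizes {n : ℕ} (τ : ℝ) (r : Fin n → ℝ)
    (A : Matrix (Fin n ⊕ Fin n ⊕ Fin n) (Fin n ⊕ Fin n ⊕ Fin n) ℝ) : Prop :=
  ∀ x0 s0 y0 : Fin n → ℝ, ∃ rstar xstar : ℝ,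
    Tendsto (fun k : ℕ => fun i : Fin n =>
        (A ^ k *ᵥ Sum.elim x0 (Sum.elim s0 y0)) (Sum.inl i) - (k : ℝ) * τ * rstar)
      atTop (𝓝 fun _ => xstar) ∧
    Tendsto (fun k : ℕ => fun i : Fin n =>
        (A ^ k *ᵥ Sum.elim x0 (Sum.elim s0 y0)) (Sum.inr (Sum.inl i)))
      atTop (𝓝 fun i => rstar * (r i)⁻¹) ∧
    Tendsto (fun k : ℕ => fun i : Fin n =>
        (A ^ k *ᵥ Sum.elim x0 (Sum.elim s0 y0)) (Sum.inr (Sum.inr i)))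
      atTop (𝓝 fun _ => (0 : ℝ))

namespace Synchronizes

variable {n : ℕ} {τ : ℝ} {r : Fin n → ℝ}
  {A : Matrix (Fin n ⊕ Fin n ⊕ Fin n) (Fin n ⊕ Fin n ⊕ Fin n) ℝ}

theorem tendsto_inr_inr (h : Synchronizes τ r A) (z : Fin n ⊕ Fin n ⊕ Fin n → ℝ) (i : Fin n) :
    Tendsto (fun k => (A ^ k *ᵥ z) (Sum.inr (Sum.inr i))) atTop (𝓝 0) := by
  obtain ⟨-, -, -, -, hy⟩ := h (z ∘ Sum.inl) (z ∘ Sum.inr ∘ Sum.inl) (z ∘ Sum.inr ∘ Sum.inr)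
  rw [← Function.comp_assoc, ← Function.comp_assoc, Sum.elim_comp_inl_inr, Sum.elim_comp_inl_inr]
    at hy
  exact tendsto_pi_nhds.1 hy i

theorem exists_tendsto_sub_nsmul (h : Synchronizes τ r A) (z : Fin n ⊕ Fin n ⊕ Fin n → ℝ)
    (j : Fin n ⊕ Fin n ⊕ Fin n) :
    ∃ c l : ℝ, Tendsto (fun k => (A ^ k *ᵥ z) j - k • c) atTop (𝓝 l) := by
  obtain ⟨rstar, xstar, hx, hs, hy⟩ :=
    h (z ∘ Sum.inl) (z ∘ Sum.inr ∘ Sum.inl) (z ∘ Sum.inr ∘ Sum.inr)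
  rw [← Function.comp_assoc, ← Function.comp_assoc, Sum.elim_comp_inl_inr, Sum.elim_comp_inl_inr]
    at hx hs hy
  rcases j with i | i | i
  · refine ⟨τ * rstar, xstar, (tendsto_pi_nhds.1 hx i).congr fun k => ?_⟩
    rw [nsmul_eq_mul, mul_assoc]
  · exact ⟨0, _, by simpa using tendsto_pi_nhds.1 hs i⟩
  · exact ⟨0, _, by simpa using tendsto_pi_nhds.1 hy i⟩

theorem p_pos {κ₁ κ₂ p : ℝ} {L : Matrix (Fin n) (Fin n) ℝ}
    (h : Synchronizes τ r (Amat n τ κ₁ κ₂ p L (diagonal r))) (hn : 0 < n) (hr : ∀ i, r i ≠ 0)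
    (hL1 : L *ᵥ (fun _ => (1 : ℝ)) = 0) : 0 < p := by
  let i : Fin n := ⟨0, hn⟩
  have hy : ∀ k : ℕ, (Amat n τ κ₁ κ₂ p L (diagonal r) ^ k *ᵥ blockVec r 0 0 1)
      (Sum.inr (Sum.inr i)) = (1 - p) ^ k / r i := fun k => by
    obtain ⟨a, b, hk⟩ := Amat_pow_mulVec_blockVec (τ := τ) (κ₁ := κ₁) (κ₂ := κ₂) hr hL1 k
    rw [hk]; rfl
  have hlim := (h.tendsto_inr_inr (blockVec r 0 0 1) i).mul_const (r i)
  simp only [hy, div_mul_cancel₀ _ (hr i), zero_mul] at hlim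
  have := abs_lt.1 (tendsto_pow_atTop_nhds_zero_iff.1 hlim)
  linarith [this.1]

theorem kappa_ne {κ₁ κ₂ p : ℝ} {L R : Matrix (Fin n) (Fin n) ℝ}
    (h : Synchronizes τ r (Amat n τ κ₁ κ₂ p L R)) (hn : 2 ≤ n)
    (hker : ∀ v : Fin n → ℝ, L *ᵥ v = 0 → ∃ c : ℝ, v = fun _ => c) : κ₁ ≠ κ₂ := by
  rintro rfl
  obtain ⟨x, i, hi⟩ := exists_mulVec_apply_ne_zero hn hker
  set v := Sum.elim x (Sum.elim 0 (-(L *ᵥ x)))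
  have hv : Amat n τ κ₁ κ₁ p L R *ᵥ v = v := by
    rw [Amat_mulVec]
    ext (j | j | j) <;>
      simp only [v, mulVec_zero, smul_zero, add_zero, zero_sub, smul_neg, sub_self, Sum.elim_inl,
        Sum.elim_inr, Pi.zero_apply, Pi.sub_apply, Pi.neg_apply, Pi.smul_apply, smul_eq_mul]
    ring
  have hfix : ∀ k, Amat n τ κ₁ κ₁ p L R ^ k *ᵥ v = v := fun k => by
    induction k with
    | zero => simp
    | succ k ih => rw [pow_succ, ← mulVec_mulVec, hv, ih]
  have hlim := h.tendsto_inr_inr v i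
  simp only [hfix] at hlim
  exact hi (neg_eq_zero.1 (tendsto_nhds_unique tendsto_const_nhds hlim))

end Synchronizes

/-- Necessity part of Theorem 1: if the algorithm synchronizes from every initial
condition, then `κ₁ ≠ κ₂`, `p > 0`, the eigenvalue `1` of `A` has algebraic
multiplicity exactly 2, and every other complex eigenvalue of `A` has modulus `< 1`. -/
theorem stmt8 (n : ℕ) (hn : 2 ≤ n) (τ κ₁ κ₂ p : ℝ)
    (L : Matrix (Fin n) (Fin n) ℝ) (r : Fin n → ℝ)
    (R : Matrix (Fin n) (Fin n) ℝ) (hR : R = Matrix.diagonal r)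
    (hr : ∀ i, 0 < r i) (hτ : 0 < τ)
    (hL1 : L *ᵥ (fun _ => (1 : ℝ)) = 0)
    (hker : ∀ v : Fin n → ℝ, L *ᵥ v = 0 → ∃ c : ℝ, v = fun _ => c)
    (hsync : ∀ x0 s0 y0 : Fin n → ℝ, ∃ rstar xstar : ℝ,
      Tendsto (fun k : ℕ => fun i : Fin n =>
          (((Amat n τ κ₁ κ₂ p L R) ^ k) *ᵥ Sum.elim x0 (Sum.elim s0 y0)) (Sum.inl i)
            - (k : ℝ) * τ * rstar)
        atTop (nhds fun _ => xstar) ∧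
      Tendsto (fun k : ℕ => fun i : Fin n =>
          (((Amat n τ κ₁ κ₂ p L R) ^ k) *ᵥ Sum.elim x0 (Sum.elim s0 y0))
            (Sum.inr (Sum.inl i)))
        atTop (nhds fun i => rstar * (r i)⁻¹) ∧
      Tendsto (fun k : ℕ => fun i : Fin n =>
          (((Amat n τ κ₁ κ₂ p L R) ^ k) *ᵥ Sum.elim x0 (Sum.elim s0 y0))
            (Sum.inr (Sum.inr i)))
        atTop (nhds fun _ => (0 : ℝ))) :
    κ₁ ≠ κ₂ ∧ 0 < p ∧
    Polynomial.rootMultiplicity (1 : ℂ)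
      ((Amat n τ κ₁ κ₂ p L R).map Complex.ofReal).charpoly = 2 ∧
    ∀ μ : ℂ, ((Amat n τ κ₁ κ₂ p L R).map Complex.ofReal).charpoly.IsRoot μ →
      μ ≠ 1 → ‖μ‖ < 1 := by
  subst hR
  set A := Amat n τ κ₁ κ₂ p L (diagonal r)
  have hsync : Synchronizes τ r A := hsync
  have hr0 : ∀ i, r i ≠ 0 := fun i => (hr i).ne'
  have hp : 0 < p := hsync.p_pos (by omega) hr0 hL1
  have hκ : κ₁ ≠ κ₂ := hsync.kappa_ne hn hker
  set f := toLin' (A.map Complex.ofReal)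
  have hdiff := tendsto_toLin'_map_ofReal_pow_mul_sub_one_sq_apply
    (tendsto_pow_mul_sub_one_sq hsync.exists_tendsto_sub_nsmul)
  refine ⟨hκ, hp, ?_, fun μ hμ hμ1 => Module.End.norm_lt_one_of_hasEigenvalue hdiff ?_ hμ1⟩
  · have hsub : f - 1 = toLin' ((A - 1).map Complex.ofReal) := by
      rw [Matrix.map_sub _ Complex.ofReal_sub,
        Matrix.map_one _ Complex.ofReal_zero Complex.ofReal_one, map_sub, toLin'_one,
        Module.End.one_eq_id]
    have hker1 := ker_toLin'_map_ofReal (ker_Amat_sub_one hp.ne' hκ hτ.ne' hr0 hL1 hker)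
    rw [← hsub] at hker1
    have hchain : (f - 1) (Complex.ofReal ∘ blockVec r 0 τ⁻¹ 0) =
        Complex.ofReal ∘ blockVec r 1 0 0 := by
      rw [hsub, toLin'_apply, map_ofReal_mulVec_ofReal,
        Amat_sub_one_mulVec_blockVec hτ.ne' hr0 hL1]
    have he : Complex.ofReal ∘ blockVec r 1 0 0 ≠ 0 := fun h => by
      simpa [blockVec] using congrFun h (Sum.inl ⟨0, by omega⟩)
    rw [← Matrix.charpoly_toLin', ← LinearMap.finrank_maxGenEigenspace_eq,
      Module.End.maxGenEigenspace_one_eq_ker_sq hdiff,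
      Module.End.finrank_ker_sq_eq_two hker1 hchain he]
  · rwa [Module.End.hasEigenvalue_iff_isRoot_charpoly, Matrix.charpoly_toLin']
end

section
/- Let κ₁, κ₂, p, ν be real numbers, write δκ = κ₁ − κ₂, and assume δκ > 0, 0 < p < 2, ν > 0, and 2κ₁ > 3p·δκ. Set a = 2κ₁/(δκp) − 3, b = 4/(δκν) + 3 − 4κ₁/(δκp), and c = 4(2−p)/(δκpν) + 2κ₁/(δκp) − 1. Then: (1) c > 0 and a > 0 always hold under these hypotheses; and (2) c < a·b if and only if ν < p·(κ₂ − δκ·p)/(κ₁ − δκ·p)². -/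
/-- The Hermite–Biehler conditions for the monic cubic of the proof of Theorem 3:
under `δκ > 0`, `0 < p < 2`, `ν > 0`, `2κ₁ > 3pδκ`, one always has `c > 0` and `a > 0`,
and `c < ab` iff `ν < p(κ₂ − δκp)/(κ₁ − δκp)²`. -/
theorem stmt14 (κ₁ κ₂ p ν : ℝ) (hδκ : 0 < κ₁ - κ₂) (hp0 : 0 < p) (hp2 : p < 2)
    (hν : 0 < ν) (hκ : 3 * p * (κ₁ - κ₂) < 2 * κ₁)
    (a b c : ℝ)
    (ha : a = 2 * κ₁ / ((κ₁ - κ₂) * p) - 3)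
    (hb : b = 4 / ((κ₁ - κ₂) * ν) + 3 - 4 * κ₁ / ((κ₁ - κ₂) * p))
    (hc : c = 4 * (2 - p) / ((κ₁ - κ₂) * p * ν) + 2 * κ₁ / ((κ₁ - κ₂) * p) - 1) :
    (0 < c ∧ 0 < a) ∧
    (c < a * b ↔ ν < p * (κ₂ - (κ₁ - κ₂) * p) / (κ₁ - (κ₁ - κ₂) * p) ^ 2) := by
  have hdp : 0 < (κ₁ - κ₂) * p := mul_pos hδκ hp0
  have hdpν : 0 < (κ₁ - κ₂) * p * ν := mul_pos hdp hν
  have ha3 : 3 < 2 * κ₁ / ((κ₁ - κ₂) * p) := by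
    rw [lt_div_iff₀ hdp]; nlinarith
  have hA : 0 < a := by rw [ha]; linarith
  have hC : 0 < c := by
    rw [hc]
    have h1 : 0 < 4 * (2 - p) / ((κ₁ - κ₂) * p * ν) := div_pos (by linarith) hdpν
    linarith
  have hden : 0 < κ₁ - (κ₁ - κ₂) * p := by nlinarith
  have hsq : 0 < (κ₁ - (κ₁ - κ₂) * p) ^ 2 := by positivity
  refine ⟨⟨hC, hA⟩, ?_⟩
  have key : (a * b - c) * ((κ₁ - κ₂) * p) ^ 2 * ν
      = 8 * (p * (κ₂ - (κ₁ - κ₂) * p) - ν * (κ₁ - (κ₁ - κ₂) * p) ^ 2) := by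
    rw [ha, hb, hc]
    field_simp
    ring
  constructor
  · intro h
    rw [lt_div_iff₀ hsq]
    nlinarith [mul_pos (mul_pos (sub_pos.mpr h) (pow_pos hdp 2)) hν]
  · intro h
    rw [lt_div_iff₀ hsq] at h
    nlinarith [mul_pos (pow_pos hdp 2) hν]
end

section
/- Fix real numbers τ > 0, r > 0, κ₁ > 0 and t₀ ∈ ℝ. Consider the naive offset-only update x_{k+1} = x_k + τ·r·s_k, s_{k+1} = s_k + κ₁·(t_k − x_k), where t_k = t₀ + k·τ. Then the offset D_k = t_k − x_k and the frequency error e_k = 1 − r·s_k evolve as (D_{k+1}, e_{k+1}) = M·(D_k, e_k) with M = [[1, τ],[−r·κ₁, 1]], and the complex eigenvalues of M are 1 + i·√(τ·r·κ₁) and 1 − i·√(τ·r·κ₁), each of modulus √(1 + τ·r·κ₁) > 1. -/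
/-!
Since `t_{k+1} - t_k = τ`, the offset obeys `D_{k+1} = D_k + τ e_k` and the frequency error
`e_{k+1} = e_k - r κ₁ D_k`. The matrix `[[1, τ], [-r κ₁, 1]]` has characteristic polynomial
`(X - 1)² + τ r κ₁`, whose roots `1 ± i √(τ r κ₁)` lie on the circle of radius
`√(1 + τ r κ₁) > 1`.
-/

open Matrix Polynomial

theorem charpoly_fin_two_of_diag_eq {R : Type*} [CommRing R] [Nontrivial R] (d b c : R) :
    (!![d, b; c, d]).charpoly = (X - C d) ^ 2 - C (b * c) := by
  rw [charpoly_fin_two, trace_fin_two_of, det_fin_two_of]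
  simp only [map_sub, map_mul, map_add]
  ring

theorem Complex.isRoot_sq_sub_one_add_C_iff {a : ℝ} (ha : 0 ≤ a) (μ : ℂ) :
    ((X - C 1) ^ 2 + C (a : ℂ)).IsRoot μ ↔
      μ = 1 + (√a : ℂ) * I ∨ μ = 1 - (√a : ℂ) * I := by
  have hsq : ((√a : ℂ) * I) ^ 2 = -a := by
    rw [mul_pow, ← ofReal_pow, Real.sq_sqrt ha, I_sq, mul_neg_one]
  rw [IsRoot.def, eval_add, eval_pow, eval_sub, eval_X, eval_C, eval_C, add_eq_zero_iff_eq_neg,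
    ← hsq, sq_eq_sq_iff_eq_or_eq_neg, sub_eq_iff_eq_add', sub_eq_iff_eq_add', ← sub_eq_add_neg]

theorem Complex.norm_one_add_sqrt_mul_I {a : ℝ} (ha : 0 ≤ a) :
    ‖1 + (√a : ℂ) * I‖ = √(1 + a) := by
  rw [← ofReal_one, norm_add_mul_I, one_pow, Real.sq_sqrt ha]

theorem Complex.norm_one_sub_sqrt_mul_I {a : ℝ} (ha : 0 ≤ a) :
    ‖1 - (√a : ℂ) * I‖ = √(1 + a) := by
  rw [← norm_conj, map_sub, map_one, map_mul, conj_ofReal, conj_I, mul_neg, sub_neg_eq_add,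
    norm_one_add_sqrt_mul_I ha]

theorem naiveSteering_errorDynamics {τ r κ₁ t₀ : ℝ} {x s t D e : ℕ → ℝ}
    (ht : ∀ k : ℕ, t k = t₀ + (k : ℝ) * τ)
    (hx : ∀ k : ℕ, x (k + 1) = x k + τ * r * s k)
    (hs : ∀ k : ℕ, s (k + 1) = s k + κ₁ * (t k - x k))
    (hD : ∀ k : ℕ, D k = t k - x k)
    (he : ∀ k : ℕ, e k = 1 - r * s k) (k : ℕ) :
    ![D (k + 1), e (k + 1)] = !![1, τ; -(r * κ₁), 1] *ᵥ ![D k, e k] := by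
  have hoffset : D (k + 1) = D k + τ * e k := by
    rw [hD, hD, ht, ht, hx, he]
    push_cast
    ring
  have hfreq : e (k + 1) = e k - r * κ₁ * D k := by
    rw [he, he, hs, hD]
    ring
  ext i
  fin_cases i
  · simp [mulVec, dotProduct, Fin.sum_univ_two, hoffset]
  · simp [mulVec, dotProduct, Fin.sum_univ_two, hfreq]
    ring

/-- Instability of the naive offset-only clock-steering rule (Eq. (4) of the paper):
the offset `D_k = t_k − x_k` and frequency error `e_k = 1 − r s_k` evolve by the matrix
`M = [[1, τ],[−rκ₁, 1]]`, whose eigenvalues are `1 ± i√(τrκ₁)`, each of modulus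
`√(1 + τrκ₁) > 1`. -/
theorem stmt16 (τ r κ₁ t₀ : ℝ) (hτ : 0 < τ) (hr : 0 < r) (hκ : 0 < κ₁)
    (x s t D e : ℕ → ℝ)
    (ht : ∀ k : ℕ, t k = t₀ + (k : ℝ) * τ)
    (hx : ∀ k : ℕ, x (k + 1) = x k + τ * r * s k)
    (hs : ∀ k : ℕ, s (k + 1) = s k + κ₁ * (t k - x k))
    (hD : ∀ k : ℕ, D k = t k - x k)
    (he : ∀ k : ℕ, e k = 1 - r * s k)
    (M : Matrix (Fin 2) (Fin 2) ℝ) (hM : M = !![1, τ; -(r * κ₁), 1]) :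
    (∀ k : ℕ, ![D (k + 1), e (k + 1)] = M *ᵥ ![D k, e k]) ∧
    (∀ μ : ℂ, (M.map Complex.ofReal).charpoly.IsRoot μ ↔
      (μ = 1 + (Real.sqrt (τ * r * κ₁) : ℂ) * Complex.I ∨
       μ = 1 - (Real.sqrt (τ * r * κ₁) : ℂ) * Complex.I)) ∧
    ‖(1 + (Real.sqrt (τ * r * κ₁) : ℂ) * Complex.I)‖
      = Real.sqrt (1 + τ * r * κ₁) ∧
    ‖(1 - (Real.sqrt (τ * r * κ₁) : ℂ) * Complex.I)‖
      = Real.sqrt (1 + τ * r * κ₁) ∧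
    1 < Real.sqrt (1 + τ * r * κ₁) := by
  subst hM
  have hpos : 0 < τ * r * κ₁ := by positivity
  have hcharpoly : (!![1, τ; -(r * κ₁), 1].map Complex.ofReal).charpoly =
      (X - C 1) ^ 2 + C ((τ * r * κ₁ : ℝ) : ℂ) := by
    refine (charpoly_map _ Complex.ofRealHom).trans ?_
    rw [charpoly_fin_two_of_diag_eq, mul_neg, map_neg, sub_neg_eq_add, ← mul_assoc]
    simp
  refine ⟨naiveSteering_errorDynamics ht hx hs hD he, fun μ => ?_,
    Complex.norm_one_add_sqrt_mul_I hpos.le, Complex.norm_one_sub_sqrt_mul_I hpos.le, ?_⟩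
  · rw [hcharpoly, Complex.isRoot_sq_sub_one_add_C_iff hpos.le]
  · rw [Real.lt_sqrt zero_le_one, one_pow]
    linarith
end

section
/- Let p, κ₁, κ₂ be real numbers with 0 < p < 2, and let ν > 0 be a real number. Then every complex root of g_ν lies in the open unit disk (|λ| < 1) if and only if 0 < κ₁ − κ₂, 2κ₁ > 3p·(κ₁ − κ₂), and ν < p·(κ₂ − p(κ₁−κ₂)) / (κ₁ − p(κ₁−κ₂))². -/
/-!
Expanding, `g_ν(λ) = λ³ − e₁λ² + e₂λ − e₃` with `e₁ = 3 − p`, `e₂ = 3 − 2p + κ₁ν` and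
`e₃ = 1 − p + mν`, where `m = κ₁ − p(κ₁ − κ₂)`. For a real cubic with roots `r, s, t` the Jury test
reads off stability from four real numbers,
`g(1) = (1−r)(1−s)(1−t)`, `−g(−1) = (1+r)(1+s)(1+t)`, `e₃² = (rst)²` and
`1 − e₂ + e₁e₃ − e₃² = (1−rs)(1−rt)(1−st)`: the roots lie in the open unit disk iff the first, second
and fourth are positive and the third is below `1`. For three real roots this is a sign analysis;
for roots `x, x̄, t` the factorisations become `(1−t)|1−x|²`, `(1+t)|1+x|²`, `(|x|²t)²` and
`(1−|x|²)|1−xt|²`. For `g_ν` the four numbers are `pν(κ₁−κ₂)`, `4(2−p) + (2m + p(κ₁−κ₂))ν`,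
`(1 − p + mν)²` and `ν(p(κ₂ − p(κ₁−κ₂)) − νm²)`, which turns the test into the stated inequalities.
-/

open Complex ComplexConjugate

/-- The Jury stability conditions for the real cubic `λ³ − e₁λ² + e₂λ − e₃`. -/
def JuryConditions (e₁ e₂ e₃ : ℝ) : Prop :=
  0 < 1 - e₁ + e₂ - e₃ ∧ 0 < 1 + e₁ + e₂ + e₃ ∧ e₃ ^ 2 < 1 ∧ 0 < 1 - e₂ + e₁ * e₃ - e₃ ^ 2

lemma abs_mul_lt_one {α : Type*} [Ring α] [LinearOrder α] [IsStrictOrderedRing α] {a b : α}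
    (ha : |a| < 1) (hb : |b| < 1) : |a * b| < 1 := by
  rw [abs_mul]
  exact mul_lt_one_of_nonneg_of_lt_one_left (abs_nonneg a) ha hb.le

section RealRoots

variable {r s t : ℝ}

lemma sq_lt_one_of_jury_factors_of_one_le_sq (hA : 0 < (1 - r) * (1 - s) * (1 - t))
    (hB : 0 < (1 + r) * (1 + s) * (1 + t)) (hC : (r * s * t) ^ 2 < 1)
    (hD : 0 < (1 - r * s) * (1 - r * t) * (1 - s * t)) (hr : 1 ≤ r ^ 2) : s ^ 2 < 1 := by
  by_contra! hs
  rcases le_or_gt 1 (r * s) with hrs | hrs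
  · have hrt : (r * t) ^ 2 < 1 := by nlinarith [mul_nonneg (sq_nonneg (r * t)) (sub_nonneg.2 hs)]
    have hst : (s * t) ^ 2 < 1 := by nlinarith [mul_nonneg (sq_nonneg (s * t)) (sub_nonneg.2 hr)]
    rw [sq_lt_one_iff_abs_lt_one] at hrt hst
    have : 0 < (1 - r * t) * (1 - s * t) :=
      mul_pos (by linarith [le_abs_self (r * t)]) (by linarith [le_abs_self (s * t)])
    nlinarith
  · have hrs' : r * s ≤ -1 := by nlinarith [sq_nonneg (r * s + 1)]
    -- the two factors below have product `(1 - r²)(1 - s²) ≥ 0` and sum `2 + 2rs ≤ 0`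
    have hprod : 0 ≤ ((1 - r) * (1 - s)) * ((1 + r) * (1 + s)) := by
      nlinarith [mul_nonneg (sub_nonneg.2 hr) (sub_nonneg.2 hs)]
    have hX : (1 - r) * (1 - s) ≤ 0 := by nlinarith
    have hY : (1 + r) * (1 + s) ≤ 0 := by nlinarith
    have h₁ : 1 < t := by nlinarith
    have h₂ : t < -1 := by nlinarith
    linarith

lemma abs_lt_one_of_jury_factors (hA : 0 < (1 - r) * (1 - s) * (1 - t))
    (hB : 0 < (1 + r) * (1 + s) * (1 + t)) (hC : (r * s * t) ^ 2 < 1)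
    (hD : 0 < (1 - r * s) * (1 - r * t) * (1 - s * t)) : |r| < 1 := by
  by_contra! hr
  rw [← one_le_sq_iff_one_le_abs] at hr
  have hs := sq_lt_one_of_jury_factors_of_one_le_sq hA hB hC hD hr
  have ht := sq_lt_one_of_jury_factors_of_one_le_sq (s := t) (t := s)
    (by linarith) (by linarith) (by linarith) (by linarith) hr
  rw [sq_lt_one_iff_abs_lt_one, abs_lt] at hs ht
  have h₁ : 0 < 1 - r := pos_of_mul_pos_left (mul_assoc (1 - r) _ _ ▸ hA) (by nlinarith)
  have h₂ : 0 < 1 + r := pos_of_mul_pos_left (mul_assoc (1 + r) _ _ ▸ hB) (by nlinarith)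
  nlinarith

lemma juryConditions_iff_of_real (r s t : ℝ) :
    JuryConditions (r + s + t) (r * s + r * t + s * t) (r * s * t) ↔
      |r| < 1 ∧ |s| < 1 ∧ |t| < 1 := by
  have hfactors : JuryConditions (r + s + t) (r * s + r * t + s * t) (r * s * t) ↔
      0 < (1 - r) * (1 - s) * (1 - t) ∧ 0 < (1 + r) * (1 + s) * (1 + t) ∧
        (r * s * t) ^ 2 < 1 ∧ 0 < (1 - r * s) * (1 - r * t) * (1 - s * t) := by
    unfold JuryConditions
    ring_nf
  rw [hfactors]
  constructor
  · rintro ⟨hA, hB, hC, hD⟩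
    refine ⟨abs_lt_one_of_jury_factors hA hB hC hD,
      abs_lt_one_of_jury_factors (r := s) (s := r) (t := t) ?_ ?_ ?_ ?_,
      abs_lt_one_of_jury_factors (r := t) (s := r) (t := s) ?_ ?_ ?_ ?_⟩ <;> linarith
  · rintro ⟨hr, hs, ht⟩
    have pos : ∀ {a : ℝ}, |a| < 1 → 0 < 1 - a ∧ 0 < 1 + a := fun h => by
      constructor <;> linarith [abs_lt.1 h]
    refine ⟨mul_pos (mul_pos (pos hr).1 (pos hs).1) (pos ht).1,
      mul_pos (mul_pos (pos hr).2 (pos hs).2) (pos ht).2,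
      (sq_lt_one_iff_abs_lt_one _).2 (abs_mul_lt_one (abs_mul_lt_one hr hs) ht), ?_⟩
    exact mul_pos (mul_pos (pos (abs_mul_lt_one hr hs)).1 (pos (abs_mul_lt_one hr ht)).1)
      (pos (abs_mul_lt_one hs ht)).1

end RealRoots

lemma Complex.normSq_one_sub_pos {z : ℂ} (hz : ‖z‖ < 1) : 0 < normSq (1 - z) :=
  normSq_pos.2 (sub_ne_zero.2 fun h => by simp [← h] at hz)

lemma juryConditions_iff_of_conj (x : ℂ) (t : ℝ) :
    JuryConditions (2 * x.re + t) (normSq x + 2 * x.re * t) (normSq x * t) ↔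
      ‖x‖ < 1 ∧ |t| < 1 := by
  have hfactors : JuryConditions (2 * x.re + t) (normSq x + 2 * x.re * t) (normSq x * t) ↔
      0 < (1 - t) * normSq (1 - x) ∧ 0 < (1 + t) * normSq (1 - -x) ∧ (normSq x * t) ^ 2 < 1 ∧
        0 < (1 - normSq x) * normSq (1 - x * t) := by
    unfold JuryConditions
    simp only [normSq_apply, sub_re, sub_im, neg_re, neg_im, mul_re, mul_im, ofReal_re, ofReal_im,
      one_re, one_im]
    ring_nf
  have hnorm : ‖x‖ < 1 ↔ normSq x < 1 := by
    rw [normSq_eq_norm_sq, sq_lt_one_iff₀ (norm_nonneg x)]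
  rw [hfactors, hnorm]
  constructor
  · rintro ⟨hA, hB, -, hD⟩
    have h₁ : 0 < 1 - t := pos_of_mul_pos_left hA (normSq_nonneg _)
    have h₂ : 0 < 1 + t := pos_of_mul_pos_left hB (normSq_nonneg _)
    have h₃ : 0 < 1 - normSq x := pos_of_mul_pos_left hD (normSq_nonneg _)
    exact ⟨by linarith, abs_lt.2 ⟨by linarith, by linarith⟩⟩
  · rintro ⟨hx, ht⟩
    have hx' : ‖x‖ < 1 := hnorm.2 hx
    have hxt : ‖x * t‖ < 1 := by
      rw [norm_mul, norm_real, Real.norm_eq_abs]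
      exact mul_lt_one_of_nonneg_of_lt_one_left (norm_nonneg x) hx' ht.le
    have hN : |normSq x| < 1 := by rwa [abs_of_nonneg (normSq_nonneg x)]
    refine ⟨mul_pos (by linarith [abs_lt.1 ht]) (normSq_one_sub_pos hx'),
      mul_pos (by linarith [abs_lt.1 ht]) (normSq_one_sub_pos (by rwa [norm_neg])),
      (sq_lt_one_iff_abs_lt_one _).2 (abs_mul_lt_one hN ht),
      mul_pos (by linarith) (normSq_one_sub_pos hxt)⟩

section Cubic

variable {x y z : ℂ} {e₁ e₂ e₃ : ℝ}

lemma vieta_of_forall_eq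
    (h : ∀ w : ℂ, (w - x) * (w - y) * (w - z) = w ^ 3 - e₁ * w ^ 2 + e₂ * w - e₃) :
    x + y + z = e₁ ∧ x * y + x * z + y * z = e₂ ∧ x * y * z = e₃ := by
  have h₀ := h 0
  have h₁ := h 1
  have h₂ := h (-1)
  refine ⟨?_, ?_, ?_⟩
  · linear_combination h₀ - (h₁ + h₂) / 2
  · linear_combination (h₁ - h₂) / 2
  · linear_combination -h₀

lemma norm_lt_one_iff_juryConditions_of_conj
    (h : ∀ w : ℂ, (w - x) * (w - conj x) * (w - z) = w ^ 3 - e₁ * w ^ 2 + e₂ * w - e₃) :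
    (‖x‖ < 1 ∧ ‖conj x‖ < 1 ∧ ‖z‖ < 1) ↔ JuryConditions e₁ e₂ e₃ := by
  obtain ⟨h₁, h₂, h₃⟩ := vieta_of_forall_eq h
  have hre : x + conj x = 2 * x.re := by rw [add_conj, ofReal_mul, ofReal_ofNat]
  obtain ⟨t, rfl⟩ : ∃ t : ℝ, z = t :=
    ⟨e₁ - 2 * x.re, by push_cast; linear_combination h₁ - hre⟩
  have he₁ : e₁ = 2 * x.re + t := by
    exact_mod_cast (by linear_combination -h₁ + hre : (e₁ : ℂ) = 2 * x.re + t)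
  have he₂ : e₂ = normSq x + 2 * x.re * t := by
    exact_mod_cast (by linear_combination -h₂ + mul_conj x + t * hre :
      (e₂ : ℂ) = normSq x + 2 * x.re * t)
  have he₃ : e₃ = normSq x * t := by
    exact_mod_cast (by linear_combination -h₃ + t * mul_conj x : (e₃ : ℂ) = normSq x * t)
  rw [he₁, he₂, he₃, juryConditions_iff_of_conj, norm_conj, norm_real, Real.norm_eq_abs]
  tauto

lemma norm_lt_one_iff_juryConditions_of_real {r s : ℝ}
    (h : ∀ w : ℂ, (w - r) * (w - s) * (w - z) = w ^ 3 - e₁ * w ^ 2 + e₂ * w - e₃) :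
    (‖(r : ℂ)‖ < 1 ∧ ‖(s : ℂ)‖ < 1 ∧ ‖z‖ < 1) ↔ JuryConditions e₁ e₂ e₃ := by
  obtain ⟨h₁, h₂, h₃⟩ := vieta_of_forall_eq h
  obtain ⟨t, rfl⟩ : ∃ t : ℝ, z = t := ⟨e₁ - r - s, by push_cast; linear_combination h₁⟩
  have he₁ : e₁ = r + s + t := by exact_mod_cast h₁.symm
  have he₂ : e₂ = r * s + r * t + s * t := by exact_mod_cast h₂.symm
  have he₃ : e₃ = r * s * t := by exact_mod_cast h₃.symm
  simp only [he₁, he₂, he₃, juryConditions_iff_of_real, norm_real, Real.norm_eq_abs]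

theorem norm_lt_one_iff_juryConditions
    (h : ∀ w : ℂ, (w - x) * (w - y) * (w - z) = w ^ 3 - e₁ * w ^ 2 + e₂ * w - e₃) :
    (‖x‖ < 1 ∧ ‖y‖ < 1 ∧ ‖z‖ < 1) ↔ JuryConditions e₁ e₂ e₃ := by
  have hconj : ∀ u, (u - x) * (u - y) * (u - z) = 0 → conj u = x ∨ conj u = y ∨ conj u = z := by
    intro u hu
    have : (conj u - x) * (conj u - y) * (conj u - z) = 0 := by
      rw [h, ← map_zero conj, ← hu, h]
      simp
    simpa only [mul_eq_zero, sub_eq_zero, or_assoc] using this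
  by_cases hx : x.im = 0
  · obtain ⟨r, rfl⟩ := conj_eq_iff_real.1 (conj_eq_iff_im.2 hx)
    by_cases hy : y.im = 0
    · obtain ⟨s, rfl⟩ := conj_eq_iff_real.1 (conj_eq_iff_im.2 hy)
      exact norm_lt_one_iff_juryConditions_of_real h
    · rcases hconj y (by ring) with hyx | hyy | hyz
      · exact absurd (by simpa using congrArg im hyx) hy
      · exact absurd (conj_eq_iff_im.1 hyy) hy
      · subst hyz
        rw [← norm_lt_one_iff_juryConditions_of_conj (x := y) (z := r) fun w => by rw [← h]; ring]
        tauto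
  · rcases hconj x (by ring) with hxx | hxy | hxz
    · exact absurd (conj_eq_iff_im.1 hxx) hx
    · subst hxy
      exact norm_lt_one_iff_juryConditions_of_conj h
    · subst hxz
      rw [← norm_lt_one_iff_juryConditions_of_conj (x := x) (z := y) fun w => by rw [← h]; ring]
      tauto

end Cubic

open Polynomial in
theorem Complex.exists_cubic_eq_mul_sub (e₁ e₂ e₃ : ℂ) :
    ∃ x y z : ℂ, ∀ w, (w - x) * (w - y) * (w - z) = w ^ 3 - e₁ * w ^ 2 + e₂ * w - e₃ := by
  set P : ℂ[X] := X ^ 3 - C e₁ * X ^ 2 + C e₂ * X - C e₃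
  have hdeg : P.natDegree = 3 := by simp only [P]; compute_degree!
  have hmonic : P.Monic := by simp only [P]; monicity!
  have hcard : P.roots.card = P.natDegree := IsAlgClosed.card_roots_eq_natDegree
  obtain ⟨x, y, z, hroots⟩ := Multiset.card_eq_three.mp (hcard.trans hdeg)
  refine ⟨x, y, z, fun w => ?_⟩
  have := congrArg (eval w) (prod_multiset_X_sub_C_of_monic_of_roots_card_eq hmonic hcard)
  simpa [P, hroots, mul_assoc] using this

theorem forall_norm_lt_one_iff_juryConditions (e₁ e₂ e₃ : ℝ) :
    (∀ w : ℂ, w ^ 3 - e₁ * w ^ 2 + e₂ * w - e₃ = 0 → ‖w‖ < 1) ↔ JuryConditions e₁ e₂ e₃ := by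
  obtain ⟨x, y, z, h⟩ := exists_cubic_eq_mul_sub (e₁ : ℂ) e₂ e₃
  rw [← norm_lt_one_iff_juryConditions h]
  simp only [← h, mul_eq_zero, sub_eq_zero, or_imp, forall_and, forall_eq, and_assoc]

lemma juryConditions_iff {p κ₁ κ₂ ν : ℝ} (hp0 : 0 < p) (hp2 : p < 2) (hν : 0 < ν) :
    JuryConditions (3 - p) (3 - 2 * p + κ₁ * ν) (1 - p + (κ₁ - p * (κ₁ - κ₂)) * ν) ↔
      0 < κ₁ - κ₂ ∧ 3 * p * (κ₁ - κ₂) < 2 * κ₁ ∧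
        ν < p * (κ₂ - p * (κ₁ - κ₂)) / (κ₁ - p * (κ₁ - κ₂)) ^ 2 := by
  set δ := κ₁ - κ₂
  set m := κ₁ - p * δ
  have hκ₂ : κ₂ - p * δ = m - δ := by simp only [δ, m]; ring
  have hκ₁ : 2 * κ₁ - 3 * p * δ = 2 * m - p * δ := by simp only [m]; ring
  unfold JuryConditions
  rw [show 1 - (3 - p) + (3 - 2 * p + κ₁ * ν) - (1 - p + m * ν) = p * ν * δ by simp only [m]; ring,
    show 1 + (3 - p) + (3 - 2 * p + κ₁ * ν) + (1 - p + m * ν) = 4 * (2 - p) + (2 * m + p * δ) * ν by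
      simp only [m]; ring,
    show 1 - (3 - 2 * p + κ₁ * ν) + (3 - p) * (1 - p + m * ν) - (1 - p + m * ν) ^ 2 =
      ν * (p * (m - δ) - ν * m ^ 2) by simp only [m]; ring,
    hκ₂, ← sub_pos (b := 3 * p * δ), hκ₁, sq_lt_one_iff_abs_lt_one, abs_lt]
  constructor
  · rintro ⟨h₁, -, -, h₄⟩
    have hδ : 0 < δ := pos_of_mul_pos_right h₁ (mul_pos hp0 hν).le
    have hX : ν * m ^ 2 < p * (m - δ) := sub_pos.1 (pos_of_mul_pos_right h₄ hν.le)
    have hmδ : δ < m := by nlinarith [mul_nonneg hν.le (sq_nonneg m)]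
    refine ⟨hδ, by nlinarith, ?_⟩
    rwa [lt_div_iff₀ (pow_pos (hδ.trans hmδ) 2)]
  · rintro ⟨hδ, -, h₃⟩
    -- `m = 0` is excluded by the junk value `x / 0 = 0`, which makes `h₃` read `ν < 0`
    have hm0 : m ≠ 0 := by
      rintro hm
      simp [hm] at h₃
      linarith
    have hX : ν * m ^ 2 < p * (m - δ) := (lt_div_iff₀ (by positivity)).1 h₃
    have hmδ : δ < m := by nlinarith [mul_nonneg hν.le (sq_nonneg m)]
    have hm : 0 < m := hδ.trans hmδ
    have hνm : ν * m < p := by nlinarith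
    refine ⟨by positivity, by nlinarith [mul_pos hm hν, mul_pos (mul_pos hp0 hδ) hν],
      ⟨by nlinarith, by nlinarith⟩, mul_pos hν (by linarith)⟩

/-- Per-eigenvalue Schur stability criterion (core of Theorem 3 of the paper): for
`0 < p < 2` and `ν > 0`, every complex root of
`g_ν(λ) = (λ−1)²(λ−1+p) + ((λ−1)κ₁ + p(κ₁−κ₂))ν` lies in the open unit disk iff
`0 < κ₁ − κ₂`, `2κ₁ > 3p(κ₁−κ₂)` and `ν < p(κ₂ − p(κ₁−κ₂))/(κ₁ − p(κ₁−κ₂))²`. -/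
theorem stmt17 (p κ₁ κ₂ ν : ℝ) (hp0 : 0 < p) (hp2 : p < 2) (hν : 0 < ν) :
    (∀ lam : ℂ,
      (lam - 1) ^ 2 * (lam - 1 + (p : ℂ)) +
          ((lam - 1) * (κ₁ : ℂ) + (p : ℂ) * ((κ₁ : ℂ) - (κ₂ : ℂ))) * (ν : ℂ) = 0 →
        ‖lam‖ < 1) ↔
    (0 < κ₁ - κ₂ ∧ 3 * p * (κ₁ - κ₂) < 2 * κ₁ ∧
      ν < p * (κ₂ - p * (κ₁ - κ₂)) / (κ₁ - p * (κ₁ - κ₂)) ^ 2) := by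
  have hg : ∀ lam : ℂ, (lam - 1) ^ 2 * (lam - 1 + (p : ℂ)) +
      ((lam - 1) * (κ₁ : ℂ) + (p : ℂ) * ((κ₁ : ℂ) - (κ₂ : ℂ))) * (ν : ℂ) =
        lam ^ 3 - ((3 - p : ℝ) : ℂ) * lam ^ 2 + ((3 - 2 * p + κ₁ * ν : ℝ) : ℂ) * lam -
          ((1 - p + (κ₁ - p * (κ₁ - κ₂)) * ν : ℝ) : ℂ) := by
    intro lam
    push_cast
    ring
  simp only [hg]
  rw [forall_norm_lt_one_iff_juryConditions, juryConditions_iff hp0 hp2 hν]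
end
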